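/- arXiv:2604.08554 — 6 statements merged into one kernel-verified Lean document; each statement's English description precedes it below -/
import Mathlib

section
/- Suppose 0 < α ≤ 1. For the mixed-environment count chain the states 0 and M are absorbing; letting τ = inf{t ≥ 0 : n(t) ∈ {0, M}}, one has τ < ∞ almost surely, and for every starting state k ∈ {0,…,M}, P(n(τ) = 0 | n(0) = k) = 1 − k/M. In particular the extinction probability does not depend on α. -/
/-!
Both sampling mechanisms are unbiased: given `n(t) = n`, the kept positions contribute
`(M - A) n / M` minority positions on average and the fresh ones `A n / M`, so the count is a
martingale with values in `{0, …, M}`. For such a chain with nonnegative transition weights the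
states `0` and `M` are forced to be absorbing. When `A ≥ 1` every interior state can step down
by one, so from any interior state the chain is absorbed at `0` within `M - 1` steps with
probability bounded below; the unabsorbed mass therefore decays geometrically and `τ < ∞`
almost surely. Since `E n(t) = k` for all `t`, letting `t → ∞` gives `M · P(n(τ) = M) = k`.
-/

/-- Hypergeometric pmf: number of minority tokens among the `M - A` kept positions. -/
noncomputable def hypPMF (M A n j : ℕ) : ℝ :=
  ((Nat.choose n j : ℝ) * (Nat.choose (M - n) ((M - A) - j) : ℝ)) /
    (Nat.choose M (M - A) : ℝ)

/-- Binomial pmf: number of minority tokens among the `A` freshly resampled positions,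
each minority with probability `n/M`. -/
noncomputable def binPMF (M A n k : ℕ) : ℝ :=
  (Nat.choose A k : ℝ) * ((n : ℝ) / (M : ℝ)) ^ k * (1 - (n : ℝ) / (M : ℝ)) ^ (A - k)

/-- One-step transition probability of the mixed-environment count chain:
`n(t+1) = J + K` with `J` hypergeometric and `K` binomial, conditionally independent. -/
noncomputable def chainStep (M A n m : ℕ) : ℝ :=
  ∑ j ∈ Finset.range (M - A + 1), ∑ k ∈ Finset.range (A + 1),
    if j + k = m then hypPMF M A n j * binPMF M A n k else 0

open Finset Filter Topology

-- Only rows `n ≤ M` are constrained: for `n > M` the weights `binPMF M A n` can be negative.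
structure IsMartingaleKernel (M : ℕ) (p : ℕ → ℕ → ℝ) : Prop where
  nonneg : ∀ n ≤ M, ∀ m, 0 ≤ p n m
  eq_zero_of_lt : ∀ n ≤ M, ∀ m, M < m → p n m = 0
  sum_eq_one : ∀ n ≤ M, ∑ m ∈ range (M + 1), p n m = 1
  sum_mul_eq : ∀ n ≤ M, ∑ m ∈ range (M + 1), (m : ℝ) * p n m = n

def kernelComp (M : ℕ) (p q : ℕ → ℕ → ℝ) (n m : ℕ) : ℝ :=
  ∑ l ∈ range (M + 1), p n l * q l m

def transitionPow (M : ℕ) (p : ℕ → ℕ → ℝ) : ℕ → ℕ → ℕ → ℝ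
  | 0 => fun n m => if n = m then 1 else 0
  | t + 1 => kernelComp M (transitionPow M p t) p

def interiorMass (M : ℕ) (p : ℕ → ℕ → ℝ) (n : ℕ) : ℝ :=
  ∑ m ∈ Ioo 0 M, p n m

theorem kernelComp_assoc (M : ℕ) (p q r : ℕ → ℕ → ℝ) :
    kernelComp M (kernelComp M p q) r = kernelComp M p (kernelComp M q r) := by
  ext n m
  simp only [kernelComp, sum_mul, mul_sum, mul_assoc]
  exact sum_comm

theorem transitionPow_one {M : ℕ} {p : ℕ → ℕ → ℝ} {n : ℕ} (hn : n ≤ M) (m : ℕ) :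
    transitionPow M p 1 n m = p n m := by
  simp [transitionPow, kernelComp, Nat.lt_succ_iff.2 hn]

theorem sum_range_succ_eq_add_sum_Ioo_add {M : ℕ} (hM : 0 < M) (f : ℕ → ℝ) :
    ∑ m ∈ range (M + 1), f m = f 0 + ∑ m ∈ Ioo 0 M, f m + f M := by
  rw [range_eq_Ico, sum_Ico_succ_top (Nat.zero_le M), sum_eq_sum_Ico_succ_bot hM,
    Ico_add_one_left_eq_Ioo]

namespace IsMartingaleKernel

variable {M : ℕ} {p q : ℕ → ℕ → ℝ}

theorem one (M : ℕ) : IsMartingaleKernel M (fun n m => if n = m then 1 else 0) where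
  nonneg n _ m := by positivity
  eq_zero_of_lt n hn m hm := if_neg (by omega)
  sum_eq_one n hn := by simp [sum_ite_eq, Nat.lt_succ_iff.2 hn]
  sum_mul_eq n hn := by simp [Nat.lt_succ_iff.2 hn]

theorem comp (hp : IsMartingaleKernel M p) (hq : IsMartingaleKernel M q) :
    IsMartingaleKernel M (kernelComp M p q) where
  nonneg n hn m := sum_nonneg fun l hl =>
    mul_nonneg (hp.nonneg n hn l) (hq.nonneg l (Nat.lt_succ_iff.1 (mem_range.1 hl)) m)
  eq_zero_of_lt n _ m hm := sum_eq_zero fun l hl => by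
    rw [hq.eq_zero_of_lt l (Nat.lt_succ_iff.1 (mem_range.1 hl)) m hm, mul_zero]
  sum_eq_one n hn := by
    simp only [kernelComp]
    rw [sum_comm]
    simp_rw [← mul_sum]
    rw [sum_congr rfl fun l hl => by rw [hq.sum_eq_one l (Nat.lt_succ_iff.1 (mem_range.1 hl))]]
    simpa using hp.sum_eq_one n hn
  sum_mul_eq n hn := by
    simp only [kernelComp, mul_sum]
    rw [sum_comm]
    simp_rw [mul_left_comm _ (p n _), ← mul_sum]
    rw [sum_congr rfl fun l hl => by rw [hq.sum_mul_eq l (Nat.lt_succ_iff.1 (mem_range.1 hl))]]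
    simpa [mul_comm] using hp.sum_mul_eq n hn

theorem pow (hp : IsMartingaleKernel M p) :
    ∀ t, IsMartingaleKernel M (transitionPow M p t)
  | 0 => one M
  | t + 1 => (hp.pow t).comp hp

theorem sum_sub_mul_eq (hp : IsMartingaleKernel M p) {n : ℕ} (hn : n ≤ M) :
    ∑ m ∈ range (M + 1), ((M : ℝ) - m) * p n m = M - n := by
  simp_rw [sub_mul, sum_sub_distrib, ← mul_sum, hp.sum_eq_one n hn, hp.sum_mul_eq n hn, mul_one]

theorem eq_ite_of_forall_ne {n z : ℕ} (hp : IsMartingaleKernel M p) (hn : n ≤ M) (hz : z ≤ M)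
    (h : ∀ m ≤ M, m ≠ z → p n m = 0) (m : ℕ) : p n m = if m = z then 1 else 0 := by
  have hne : ∀ m, m ≠ z → p n m = 0 := fun m hm =>
    (le_or_gt m M).elim (h m · hm) (hp.eq_zero_of_lt n hn m)
  split_ifs with hm
  · subst hm
    rw [← hp.sum_eq_one n hn, sum_eq_single m (fun l _ hl => hne l hl)
      (fun hm' => absurd (mem_range.2 (Nat.lt_succ_of_le hz)) hm')]
  · exact hne m hm

theorem apply_zero (hp : IsMartingaleKernel M p) (m : ℕ) :
    p 0 m = if m = 0 then 1 else 0 := by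
  refine hp.eq_ite_of_forall_ne (Nat.zero_le M) (Nat.zero_le M) (fun m hm hm0 => ?_) m
  have hterms := (sum_eq_zero_iff_of_nonneg fun l _ =>
    mul_nonneg (Nat.cast_nonneg l) (hp.nonneg 0 (Nat.zero_le M) l)).1
    (by simpa using hp.sum_mul_eq 0 (Nat.zero_le M))
  simpa [hm0] using hterms m (mem_range.2 (Nat.lt_succ_of_le hm))

theorem apply_top (hp : IsMartingaleKernel M p) (m : ℕ) :
    p M m = if m = M then 1 else 0 := by
  refine hp.eq_ite_of_forall_ne le_rfl le_rfl (fun m hm hmM => ?_) m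
  have hterms := (sum_eq_zero_iff_of_nonneg fun l hl =>
    mul_nonneg (sub_nonneg.2 (Nat.cast_le.2 (Nat.lt_succ_iff.1 (mem_range.1 hl))))
      (hp.nonneg M le_rfl l)).1 (by simpa using hp.sum_sub_mul_eq le_rfl)
  have hlt : (m : ℝ) < M := by exact_mod_cast lt_of_le_of_ne hm hmM
  simpa [sub_ne_zero.2 hlt.ne'] using hterms m (mem_range.2 (Nat.lt_succ_of_le hm))

theorem mul_apply_top_le (hp : IsMartingaleKernel M p) {n : ℕ} (hn : n ≤ M) :
    M * p n M ≤ n := by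
  rw [← hp.sum_mul_eq n hn]
  exact single_le_sum (f := fun m : ℕ => (m : ℝ) * p n m)
    (fun m _ => mul_nonneg (Nat.cast_nonneg m) (hp.nonneg n hn m)) (self_mem_range_succ M)

theorem mul_apply_zero_le (hp : IsMartingaleKernel M p) {n : ℕ} (hn : n ≤ M) :
    M * p n 0 ≤ M - n := by
  rw [← hp.sum_sub_mul_eq hn]
  refine (single_le_sum (f := fun m : ℕ => ((M : ℝ) - m) * p n m) (fun m hm => ?_)
    (mem_range.2 (Nat.succ_pos M))).trans_eq' (by simp)
  exact mul_nonneg (sub_nonneg.2 (Nat.cast_le.2 (Nat.lt_succ_iff.1 (mem_range.1 hm))))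
    (hp.nonneg n hn m)

theorem apply_zero_add_interiorMass_add (hp : IsMartingaleKernel M p) (hM : 0 < M) {n : ℕ}
    (hn : n ≤ M) : p n 0 + interiorMass M p n + p n M = 1 := by
  rw [interiorMass, ← sum_range_succ_eq_add_sum_Ioo_add hM, hp.sum_eq_one n hn]

theorem interiorMass_nonneg (hp : IsMartingaleKernel M p) {n : ℕ} (hn : n ≤ M) :
    0 ≤ interiorMass M p n :=
  sum_nonneg fun m _ => hp.nonneg n hn m

theorem interiorMass_le_one (hp : IsMartingaleKernel M p) (hM : 0 < M) {n : ℕ} (hn : n ≤ M) :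
    interiorMass M p n ≤ 1 := by
  linarith [hp.apply_zero_add_interiorMass_add hM hn, hp.nonneg n hn 0, hp.nonneg n hn M]

theorem interiorMass_zero (hp : IsMartingaleKernel M p) : interiorMass M p 0 = 0 :=
  sum_eq_zero fun m hm => by rw [hp.apply_zero, if_neg (mem_Ioo.1 hm).1.ne']

theorem interiorMass_top (hp : IsMartingaleKernel M p) : interiorMass M p M = 0 :=
  sum_eq_zero fun m hm => by rw [hp.apply_top, if_neg (mem_Ioo.1 hm).2.ne]

theorem apply_zero_le (hp : IsMartingaleKernel M p) (hM : 0 < M) {n : ℕ} (hn : n ≤ M) :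
    p n 0 ≤ 1 - n / M := by
  have hM' : (0 : ℝ) < M := by exact_mod_cast hM
  rw [one_sub_div hM'.ne', le_div_iff₀ hM', mul_comm]
  exact hp.mul_apply_zero_le hn

theorem le_apply_zero (hp : IsMartingaleKernel M p) (hM : 0 < M) {n : ℕ} (hn : n ≤ M) :
    1 - n / M - interiorMass M p n ≤ p n 0 := by
  have hM' : (0 : ℝ) < M := by exact_mod_cast hM
  have htop : p n M ≤ n / M := by
    rw [le_div_iff₀ hM', mul_comm]
    exact hp.mul_apply_top_le hn
  linarith [hp.apply_zero_add_interiorMass_add hM hn]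

theorem transitionPow_add (hp : IsMartingaleKernel M p) {n : ℕ} (hn : n ≤ M) (t : ℕ) :
    ∀ s m, transitionPow M p (t + s) n m =
      kernelComp M (transitionPow M p t) (transitionPow M p s) n m
  | 0, m => by
    simp only [transitionPow, kernelComp, add_zero, mul_ite, mul_one, mul_zero,
      sum_ite_eq', mem_range]
    split_ifs with hm
    · rfl
    · exact (hp.pow t).eq_zero_of_lt n hn m (by omega)
  | s + 1, m => by
    rw [← add_assoc, transitionPow, transitionPow, ← kernelComp_assoc]
    simp only [kernelComp]
    exact sum_congr rfl fun l _ => by rw [transitionPow_add hp hn t s l, kernelComp]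

theorem transitionPow_apply_zero_pos (hp : IsMartingaleKernel M p)
    (hdown : ∀ n ∈ Ioo 0 M, 0 < p n (n - 1)) :
    ∀ s n, n ≤ s → n < M → 0 < transitionPow M p s n 0
  | 0, n, hn, _ => by simp [transitionPow, Nat.le_zero.1 hn]
  | s + 1, 0, _, _ => by simp [(hp.pow (s + 1)).apply_zero]
  | s + 1, n + 1, hn, hnM => by
    rw [add_comm s, hp.transitionPow_add hnM.le]
    refine lt_of_lt_of_le ?_ (single_le_sum (f := fun l =>
        transitionPow M p 1 (n + 1) l * transitionPow M p s l 0)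
      (fun l hl => mul_nonneg ((hp.pow 1).nonneg _ hnM.le l)
        ((hp.pow s).nonneg l (Nat.lt_succ_iff.1 (mem_range.1 hl)) 0))
      (mem_range.2 (by omega : n < M + 1)))
    rw [transitionPow_one hnM.le]
    exact mul_pos (hdown (n + 1) (mem_Ioo.2 ⟨n.succ_pos, hnM⟩))
      (hp.transitionPow_apply_zero_pos hdown s n (by omega) (by omega))

theorem interiorMass_transitionPow_add_le (hp : IsMartingaleKernel M p) (hM : 0 < M) {d : ℕ}
    {θ : ℝ} (hθ : ∀ l ∈ Ioo 0 M, interiorMass M (transitionPow M p d) l ≤ θ)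
    {k : ℕ} (hk : k ≤ M) (t : ℕ) :
    interiorMass M (transitionPow M p (t + d)) k ≤
      θ * interiorMass M (transitionPow M p t) k := by
  have hQ := hp.pow
  have hsplit : interiorMass M (transitionPow M p (t + d)) k =
      ∑ l ∈ range (M + 1), transitionPow M p t k l *
        interiorMass M (transitionPow M p d) l := by
    simp only [interiorMass, hp.transitionPow_add hk, kernelComp, mul_sum]
    exact sum_comm
  rw [hsplit, sum_range_succ_eq_add_sum_Ioo_add hM, (hQ d).interiorMass_zero,
    (hQ d).interiorMass_top, mul_zero, mul_zero, zero_add, add_zero, interiorMass, mul_sum]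
  exact sum_le_sum fun l hl => by
    rw [mul_comm θ]
    exact mul_le_mul_of_nonneg_left (hθ l hl) ((hQ t).nonneg k hk l)

theorem exists_interiorMass_transitionPow_le (hp : IsMartingaleKernel M p) (hM : 2 ≤ M)
    (hdown : ∀ n ∈ Ioo 0 M, 0 < p n (n - 1)) :
    ∃ θ, 0 ≤ θ ∧ θ < 1 ∧
      ∀ l ∈ Ioo 0 M, interiorMass M (transitionPow M p (M - 1)) l ≤ θ := by
  have hne : (Ioo 0 M).Nonempty := ⟨1, mem_Ioo.2 ⟨one_pos, hM⟩⟩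
  have hQ := hp.pow (M - 1)
  refine ⟨(Ioo 0 M).sup' hne (interiorMass M (transitionPow M p (M - 1))), ?_, ?_,
    fun l hl => le_sup' _ hl⟩
  · exact (hQ.interiorMass_nonneg (by omega)).trans (le_sup' _ (mem_Ioo.2 ⟨one_pos, hM⟩))
  · refine (sup'_lt_iff hne).2 fun l hl => ?_
    obtain ⟨hl0, hlM⟩ := mem_Ioo.1 hl
    linarith [hQ.apply_zero_add_interiorMass_add (by omega) hlM.le, hQ.nonneg l hlM.le M,
      hp.transitionPow_apply_zero_pos hdown (M - 1) l (by omega) hlM]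

theorem tendsto_interiorMass_transitionPow (hp : IsMartingaleKernel M p) (hM : 2 ≤ M)
    (hdown : ∀ n ∈ Ioo 0 M, 0 < p n (n - 1)) {k : ℕ} (hk : k ≤ M) :
    Tendsto (fun t => interiorMass M (transitionPow M p t) k) atTop (𝓝 0) := by
  have hQ := hp.pow
  obtain ⟨θ, hθ0, hθ1, hθ⟩ := hp.exists_interiorMass_transitionPow_le hM hdown
  have hanti : Antitone fun t => interiorMass M (transitionPow M p t) k := by
    refine antitone_nat_of_succ_le fun t => ?_
    simpa using hp.interiorMass_transitionPow_add_le (by omega)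
      (fun l hl => (hQ 1).interiorMass_le_one (by omega) (mem_Ioo.1 hl).2.le) hk t
  have hgeom : ∀ s, interiorMass M (transitionPow M p ((M - 1) * s)) k ≤ θ ^ s := by
    intro s
    induction s with
    | zero => simpa using (hQ 0).interiorMass_le_one (by omega) hk
    | succ s ih =>
      rw [mul_add_one, pow_succ']
      exact (hp.interiorMass_transitionPow_add_le (by omega) hθ hk _).trans
        (mul_le_mul_of_nonneg_left ih hθ0)
  refine squeeze_zero (fun t => (hQ t).interiorMass_nonneg hk)
    (fun t => (hanti (Nat.div_mul_le_self t (M - 1))).trans ?_)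
    ((tendsto_pow_atTop_nhds_zero_of_lt_one hθ0 hθ1).comp
      (Nat.tendsto_div_const_atTop (n := M - 1) (by omega)))
  rw [mul_comm]
  exact hgeom _

theorem tendsto_transitionPow_apply_zero (hp : IsMartingaleKernel M p) (hM : 2 ≤ M)
    (hdown : ∀ n ∈ Ioo 0 M, 0 < p n (n - 1)) {k : ℕ} (hk : k ≤ M) :
    Tendsto (fun t => transitionPow M p t k 0) atTop (𝓝 (1 - k / M)) := by
  have hlow := (tendsto_const_nhds (x := (1 : ℝ) - k / M)).sub
    (hp.tendsto_interiorMass_transitionPow hM hdown hk)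
  rw [sub_zero] at hlow
  exact tendsto_of_tendsto_of_tendsto_of_le_of_le hlow tendsto_const_nhds
    (fun t => (hp.pow t).le_apply_zero (by omega) hk)
    (fun t => (hp.pow t).apply_zero_le (by omega) hk)

theorem tendsto_transitionPow_apply_zero_add_apply_top (hp : IsMartingaleKernel M p)
    (hM : 2 ≤ M) (hdown : ∀ n ∈ Ioo 0 M, 0 < p n (n - 1)) {k : ℕ} (hk : k ≤ M) :
    Tendsto (fun t => transitionPow M p t k 0 + transitionPow M p t k M) atTop
      (𝓝 1) := by
  have h := (tendsto_const_nhds (x := (1 : ℝ))).sub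
    (hp.tendsto_interiorMass_transitionPow hM hdown hk)
  rw [sub_zero] at h
  refine h.congr fun t => ?_
  linarith [(hp.pow t).apply_zero_add_interiorMass_add (by omega) hk]

end IsMartingaleKernel

theorem sum_range_mul_choose_mul_choose (a b d : ℕ) :
    ∑ j ∈ range (d + 2), j * (a.choose j * b.choose (d + 1 - j)) =
      a * (a + b - 1).choose d := by
  cases a with
  | zero => exact (sum_eq_zero fun j _ => by cases j <;> simp).trans (zero_mul _).symm
  | succ a =>
    rw [sum_range_succ', zero_mul, add_zero, add_right_comm, Nat.add_sub_cancel,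
      Nat.add_choose_eq, Nat.sum_antidiagonal_eq_sum_range_succ_mk, mul_sum]
    refine sum_congr rfl fun i _ => ?_
    rw [Nat.add_sub_add_right, ← mul_assoc, ← mul_assoc, mul_comm (i + 1),
      ← Nat.add_one_mul_choose_eq]

theorem hypPMF_nonneg (M A n j : ℕ) : 0 ≤ hypPMF M A n j := by
  unfold hypPMF
  positivity

theorem hypPMF_pos {M A n j : ℕ} (hjn : j ≤ n) (hj : M - A - j ≤ M - n) :
    0 < hypPMF M A n j := by
  unfold hypPMF
  have := Nat.choose_pos hjn
  have := Nat.choose_pos hj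
  have := Nat.choose_pos (Nat.sub_le M A)
  positivity

theorem sum_hypPMF {M A n : ℕ} (hn : n ≤ M) :
    ∑ j ∈ range (M - A + 1), hypPMF M A n j = 1 := by
  have hden : (M.choose (M - A) : ℝ) ≠ 0 := by
    exact_mod_cast (Nat.choose_pos (Nat.sub_le M A)).ne'
  simp only [hypPMF, ← sum_div]
  rw [div_eq_one_iff_eq hden]
  exact_mod_cast by
    rw [← Nat.sum_antidiagonal_eq_sum_range_succ_mk
      (fun ij => n.choose ij.1 * (M - n).choose ij.2), ← Nat.add_choose_eq, Nat.add_sub_cancel' hn]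

theorem sum_mul_hypPMF {M A n : ℕ} (hn : n ≤ M) (hAM : A ≤ M) (hM : 0 < M) :
    ∑ j ∈ range (M - A + 1), (j : ℝ) * hypPMF M A n j = n * (M - A) / M := by
  obtain hA | ⟨d, hd⟩ : M - A = 0 ∨ ∃ d, M - A = d + 1 :=
    (M - A).eq_zero_or_eq_succ_pred.imp id fun h => ⟨_, h⟩
  · have : (M : ℝ) - A = 0 := by rw [← Nat.cast_sub hAM, hA, Nat.cast_zero]
    simp [hA, this]
  have hMA : (M : ℝ) - A = d + 1 := by rw [← Nat.cast_sub hAM, hd]; push_cast; ring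
  have hden : (M.choose (d + 1) : ℝ) ≠ 0 := by exact_mod_cast (Nat.choose_pos (by omega)).ne'
  have hchoose : (M : ℝ) * (M - 1).choose d = M.choose (d + 1) * (d + 1) := by
    have := Nat.add_one_mul_choose_eq (M - 1) d
    rw [Nat.sub_add_cancel hM] at this
    exact_mod_cast this
  have hsum := sum_range_mul_choose_mul_choose n (M - n) d
  rw [Nat.add_sub_cancel' hn] at hsum
  have hsum' := congrArg (Nat.cast : ℕ → ℝ) hsum
  push_cast at hsum'
  simp only [hypPMF, hd, mul_div_assoc', ← sum_div, hMA]
  rw [div_eq_div_iff hden (by positivity), hsum']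
  linear_combination (n : ℝ) * hchoose

theorem binPMF_eq_eval_bernsteinPolynomial (M A n k : ℕ) :
    binPMF M A n k = (bernsteinPolynomial ℝ A k).eval ((n : ℝ) / M) := by
  simp [binPMF, bernsteinPolynomial]

theorem binPMF_nonneg {M n : ℕ} (hn : n ≤ M) (A k : ℕ) : 0 ≤ binPMF M A n k := by
  have hx : (n : ℝ) / M ≤ 1 := div_le_one_of_le₀ (Nat.cast_le.2 hn) (Nat.cast_nonneg M)
  unfold binPMF
  have := sub_nonneg.2 hx
  positivity

theorem binPMF_pos {M A n k : ℕ} (hn0 : 0 < n) (hnM : n < M) (hk : k ≤ A) :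
    0 < binPMF M A n k := by
  have hM : (0 : ℝ) < M := by exact_mod_cast hn0.trans hnM
  have hx : (n : ℝ) / M < 1 := (div_lt_one hM).2 (Nat.cast_lt.2 hnM)
  unfold binPMF
  have := sub_pos.2 hx
  have := Nat.choose_pos hk
  positivity

theorem sum_binPMF (M A n : ℕ) : ∑ k ∈ range (A + 1), binPMF M A n k = 1 := by
  simpa [binPMF_eq_eval_bernsteinPolynomial, Polynomial.eval_finsetSum] using
    congrArg (Polynomial.eval ((n : ℝ) / M)) (bernsteinPolynomial.sum ℝ A)

theorem sum_mul_binPMF (M A n : ℕ) :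
    ∑ k ∈ range (A + 1), (k : ℝ) * binPMF M A n k = A * (n / M) := by
  simpa [binPMF_eq_eval_bernsteinPolynomial, Polynomial.eval_finsetSum, nsmul_eq_mul] using
    congrArg (Polynomial.eval ((n : ℝ) / M)) (bernsteinPolynomial.sum_smul (R := ℝ) A)

theorem sum_mul_chainStep {M A : ℕ} (hAM : A ≤ M) (n : ℕ) (φ : ℕ → ℝ) :
    ∑ m ∈ range (M + 1), φ m * chainStep M A n m =
      ∑ j ∈ range (M - A + 1), ∑ k ∈ range (A + 1),
        φ (j + k) * (hypPMF M A n j * binPMF M A n k) := by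
  simp only [chainStep, mul_sum, mul_ite, mul_zero]
  rw [sum_comm]
  refine sum_congr rfl fun j hj => ?_
  rw [sum_comm]
  refine sum_congr rfl fun k hk => ?_
  rw [sum_ite_eq, if_pos (mem_range.2 (by simp only [mem_range] at hj hk; omega))]

theorem hypPMF_mul_binPMF_le_chainStep {M A n j k : ℕ} (hn : n ≤ M) (hj : j ≤ M - A)
    (hk : k ≤ A) : hypPMF M A n j * binPMF M A n k ≤ chainStep M A n (j + k) := by
  have hterm : ∀ j' k',
      0 ≤ if j' + k' = j + k then hypPMF M A n j' * binPMF M A n k' else 0 := fun j' k' => by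
    split_ifs
    exacts [mul_nonneg (hypPMF_nonneg M A n j') (binPMF_nonneg hn A k'), le_rfl]
  calc hypPMF M A n j * binPMF M A n k
      = if j + k = j + k then hypPMF M A n j * binPMF M A n k else 0 := (if_pos rfl).symm
    _ ≤ ∑ k' ∈ range (A + 1),
          if j + k' = j + k then hypPMF M A n j * binPMF M A n k' else 0 :=
      single_le_sum (f := fun k' => _) (fun k' _ => hterm j k') (mem_range.2 (by omega))
    _ ≤ chainStep M A n (j + k) :=
      single_le_sum (f := fun j' => ∑ k' ∈ range (A + 1), _)
        (fun j' _ => sum_nonneg fun k' _ => hterm j' k') (mem_range.2 (by omega))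

theorem isMartingaleKernel_chainStep {M A : ℕ} (hAM : A ≤ M) (hM : 0 < M) :
    IsMartingaleKernel M (chainStep M A) where
  nonneg n hn m := sum_nonneg fun j _ => sum_nonneg fun k _ => by
    split_ifs
    · exact mul_nonneg (hypPMF_nonneg M A n j) (binPMF_nonneg hn A k)
    · exact le_rfl
  eq_zero_of_lt n _ m hm := sum_eq_zero fun j hj => sum_eq_zero fun k hk =>
    if_neg (by simp only [mem_range] at hj hk; omega)
  sum_eq_one n hn := by
    simpa [← mul_sum, sum_binPMF, sum_hypPMF hn] using sum_mul_chainStep hAM n fun _ => 1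
  sum_mul_eq n hn := by
    have hsplit : ∀ j k, ((j + k : ℕ) : ℝ) * (hypPMF M A n j * binPMF M A n k) =
        j * hypPMF M A n j * binPMF M A n k + hypPMF M A n j * (k * binPMF M A n k) :=
      fun j k => by push_cast; ring
    simp only [sum_mul_chainStep hAM, hsplit, sum_add_distrib, ← mul_sum, ← sum_mul]
    rw [sum_binPMF, sum_hypPMF hn, sum_mul_binPMF, sum_mul_hypPMF hn hAM hM]
    field_simp
    ring

theorem chainStep_pred_pos {M A : ℕ} (hA : 1 ≤ A) :
    ∀ n ∈ Ioo 0 M, 0 < chainStep M A n (n - 1) := by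
  intro n hn
  obtain ⟨hn0, hnM⟩ := mem_Ioo.1 hn
  -- `J = min (n - 1) (M - A)`, `K = n - 1 - J`: the kept sample can miss a minority position
  -- because `A ≥ 1`
  have hle := hypPMF_mul_binPMF_le_chainStep (A := A) hnM.le (j := min (n - 1) (M - A))
    (k := n - 1 - min (n - 1) (M - A)) (min_le_right _ _) (by omega)
  rw [show min (n - 1) (M - A) + (n - 1 - min (n - 1) (M - A)) = n - 1 by omega] at hle
  exact (mul_pos (hypPMF_pos (by omega) (by omega)) (binPMF_pos hn0 hnM (by omega))).trans_le
    hle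

section

open MeasureTheory

theorem measure_eq_tsum_preimage_singleton_inter {Ω β : Type*} [MeasurableSpace Ω]
    [Countable β] [MeasurableSpace β] [MeasurableSingletonClass β] (μ : Measure Ω) {X : Ω → β}
    (hX : Measurable X) (E : Set Ω) : μ E = ∑' b, μ (X ⁻¹' {b} ∩ E) := by
  have := tsum_measure_preimage_singleton (μ := μ.restrict E) Set.countable_univ (f := X)
    fun b _ => hX (measurableSet_singleton b)
  rw [tsum_univ (f := fun b => μ.restrict E (X ⁻¹' {b}))] at this
  simpa [Measure.restrict_apply (hX (measurableSet_singleton _))] using this.symm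

def IsMarkovChain {Ω : Type*} [MeasurableSpace Ω] (ℙ : Measure Ω) (N : ℕ → Ω → ℕ)
    (p : ℕ → ℕ → ℝ) : Prop :=
  ∀ (t : ℕ) (a : ℕ → ℕ) (m : ℕ),
    ℙ {ω | (∀ i ≤ t, N i ω = a i) ∧ N (t + 1) ω = m} =
      ℙ {ω | ∀ i ≤ t, N i ω = a i} * ENNReal.ofReal (p (a t) m)

namespace IsMarkovChain

variable {Ω : Type*} [MeasurableSpace Ω] {ℙ : Measure Ω} {N : ℕ → Ω → ℕ} {p : ℕ → ℕ → ℝ}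

theorem measure_eq_and_succ_eq (hN : IsMarkovChain ℙ N p) (hmeas : ∀ t, Measurable (N t))
    (t n m : ℕ) :
    ℙ {ω | N t ω = n ∧ N (t + 1) ω = m} = ℙ {ω | N t ω = n} * ENNReal.ofReal (p n m) := by
  -- condition on the history `(N 0, …, N (t-1))`, which takes countably many values
  let X : Ω → (Fin t → ℕ) := fun ω i => N i ω
  have hX : Measurable X := measurable_pi_lambda _ fun i => hmeas i
  let path : (Fin t → ℕ) → ℕ → ℕ := fun b i => if h : i < t then b ⟨i, h⟩ else n
  have hpath : ∀ b ω, (∀ i ≤ t, N i ω = path b i) ↔ ω ∈ X ⁻¹' {b} ∧ N t ω = n := by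
    intro b ω
    simp only [Set.mem_preimage, Set.mem_singleton_iff, funext_iff, X, path]
    refine ⟨fun h => ⟨fun i => by simpa [i.2] using h i i.2.le, by simpa using h t le_rfl⟩,
      fun ⟨hb, hn⟩ i hi => ?_⟩
    rcases hi.lt_or_eq with hi | rfl
    · simpa [hi] using hb ⟨i, hi⟩
    · simpa using hn
  rw [measure_eq_tsum_preimage_singleton_inter ℙ hX,
    measure_eq_tsum_preimage_singleton_inter ℙ hX {ω | N t ω = n}, ← ENNReal.tsum_mul_right]
  refine tsum_congr fun b => ?_
  have h := hN t (path b) m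
  rw [show path b t = n from dif_neg (lt_irrefl t)] at h
  convert h using 2
  · ext ω
    simp only [Set.mem_inter_iff, Set.mem_ofPred_eq, hpath, and_assoc]
  · congr 1
    ext ω
    simp only [Set.mem_inter_iff, Set.mem_ofPred_eq, hpath]

theorem measure_eq_transitionPow [IsProbabilityMeasure ℙ] {M k : ℕ}
    (hN : IsMarkovChain ℙ N p) (hmeas : ∀ t, Measurable (N t)) (hp : IsMartingaleKernel M p)
    (hk : k ≤ M) (hinit : ℙ {ω | N 0 ω = k} = 1) :
    ∀ t n, ℙ {ω | N t ω = n} = ENNReal.ofReal (transitionPow M p t k n)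
  | 0, n => by
    by_cases hn : k = n
    · simp [transitionPow, ← hn, hinit]
    · simp only [transitionPow, if_neg hn, ENNReal.ofReal_zero]
      refine measure_mono_null
        (fun ω (hω : N 0 ω = n) (hωk : N 0 ω = k) => hn (hωk.symm.trans hω))
        ((prob_compl_eq_zero_iff (hmeas 0 (measurableSet_singleton k))).2 hinit)
  | t + 1, m => by
    have hQ := hp.pow t
    rw [measure_eq_tsum_preimage_singleton_inter ℙ (hmeas t)]
    simp_rw [Set.preimage, Set.mem_singleton_iff, Set.inter_ofPred_eq_sep, Set.mem_ofPred_eq,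
      hN.measure_eq_and_succ_eq hmeas, hN.measure_eq_transitionPow hmeas hp hk hinit t,
      ← ENNReal.ofReal_mul (hQ.nonneg k hk _)]
    rw [tsum_eq_sum (s := range (M + 1)) fun n hn => by
        rw [hQ.eq_zero_of_lt k hk n (by simpa using hn), zero_mul, ENNReal.ofReal_zero],
      ← ENNReal.ofReal_sum_of_nonneg fun n hn =>
        mul_nonneg (hQ.nonneg k hk n) (hp.nonneg n (Nat.lt_succ_iff.1 (mem_range.1 hn)) m)]
    rfl

theorem ae_eq_of_le_of_eq (hN : IsMarkovChain ℙ N p) (hmeas : ∀ t, Measurable (N t)) {z : ℕ}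
    (hz : ∀ m ≠ z, p z m = 0) : ∀ᵐ ω ∂ℙ, ∀ s t, s ≤ t → N s ω = z → N t ω = z := by
  have hstep : ∀ t, ∀ᵐ ω ∂ℙ, N t ω = z → N (t + 1) ω = z := fun t => by
    refine ae_iff.2 (measure_mono_null (fun ω hω => ?_)
      ((measure_biUnion_null_iff (Set.to_countable {z}ᶜ)).2 fun m hm =>
        (hN.measure_eq_and_succ_eq hmeas t z m).trans
          (by rw [hz m hm, ENNReal.ofReal_zero, mul_zero])))
    simp only [Set.mem_ofPred_eq, Classical.not_imp] at hω
    exact Set.mem_biUnion (x := N (t + 1) ω) hω.2 ⟨hω.1, rfl⟩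
  filter_upwards [ae_all_iff.2 hstep] with ω hω s t hst hs
  induction t, hst using Nat.le_induction with
  | base => exact hs
  | succ t _ ih => exact hω t ih

variable [IsProbabilityMeasure ℙ] {M k : ℕ}

theorem measure_absorption (hN : IsMarkovChain ℙ N p)
    (hmeas : ∀ t, Measurable (N t)) (hp : IsMartingaleKernel M p) (hM : 2 ≤ M)
    (hdown : ∀ n ∈ Ioo 0 M, 0 < p n (n - 1)) (hk : k ≤ M) (hinit : ℙ {ω | N 0 ω = k} = 1) :
    ℙ {ω | ∃ t, N t ω = 0 ∨ N t ω = M} = 1 := by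
  have hlaw := hN.measure_eq_transitionPow hmeas hp hk hinit
  refine le_antisymm prob_le_one (le_of_tendsto (ENNReal.ofReal_one ▸ ENNReal.tendsto_ofReal
    (hp.tendsto_transitionPow_apply_zero_add_apply_top hM hdown hk)) (Eventually.of_forall
    fun t => ?_))
  rw [ENNReal.ofReal_add ((hp.pow t).nonneg k hk 0) ((hp.pow t).nonneg k hk M), ← hlaw,
    ← hlaw, ← measure_union (s₁ := {ω | N t ω = 0}) (s₂ := {ω | N t ω = M})
      (Set.disjoint_left.2 fun ω (h0 : N t ω = 0) (hM' : N t ω = M) => by omega)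
      (hmeas t (measurableSet_singleton M))]
  exact measure_mono fun ω hω => ⟨t, hω⟩

theorem measure_extinction (hN : IsMarkovChain ℙ N p)
    (hmeas : ∀ t, Measurable (N t)) (hp : IsMartingaleKernel M p) (hM : 2 ≤ M)
    (hdown : ∀ n ∈ Ioo 0 M, 0 < p n (n - 1)) (hk : k ≤ M) (hinit : ℙ {ω | N 0 ω = k} = 1) :
    ℙ {ω | (∃ t, N t ω = 0 ∨ N t ω = M) ∧ N (sInf {t | N t ω = 0 ∨ N t ω = M}) ω = 0} =
      ENNReal.ofReal (1 - k / M) := by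
  have hstay0 := hN.ae_eq_of_le_of_eq hmeas fun m hm => by rw [hp.apply_zero, if_neg hm]
  have hstayM := hN.ae_eq_of_le_of_eq hmeas fun m hm => by rw [hp.apply_top, if_neg hm]
  have hevent :
      {ω | (∃ t, N t ω = 0 ∨ N t ω = M) ∧ N (sInf {t | N t ω = 0 ∨ N t ω = M}) ω = 0} =ᵐ[ℙ]
        ⋃ t, {ω | N t ω = 0} := by
    refine eventuallyEq_set.2 ?_
    filter_upwards [hstayM] with ω hω
    simp only [Set.mem_iUnion, Set.mem_ofPred_eq]
    refine ⟨fun ⟨_, h⟩ => ⟨_, h⟩, fun ⟨t, ht⟩ => ⟨⟨t, .inl ht⟩, ?_⟩⟩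
    refine (Nat.sInf_mem (s := {t | N t ω = 0 ∨ N t ω = M}) ⟨t, .inl ht⟩).resolve_right
      fun hτ => ?_
    have := hω _ t (Nat.sInf_le (.inl ht)) hτ
    omega
  have hacc : ∀ t, ℙ (Set.accumulate (fun t => {ω | N t ω = 0}) t) =
      ENNReal.ofReal (transitionPow M p t k 0) := fun t => by
    rw [← hN.measure_eq_transitionPow hmeas hp hk hinit]
    refine measure_congr (eventuallyEq_set.2 ?_)
    filter_upwards [hstay0] with ω hω
    simp only [Set.mem_accumulate, Set.mem_ofPred_eq]
    exact ⟨fun ⟨s, hs, h⟩ => hω s t hs h, fun h => ⟨t, le_rfl, h⟩⟩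
  rw [measure_congr hevent]
  refine tendsto_nhds_unique (tendsto_measure_iUnion_accumulate.congr hacc) ?_
  exact ENNReal.tendsto_ofReal (hp.tendsto_transitionPow_apply_zero hM hdown hk)

end IsMarkovChain

end

open MeasureTheory in
theorem absorption_and_extinction_probability_general
    {Ω : Type*} [MeasurableSpace Ω] (ℙ : Measure Ω) [IsProbabilityMeasure ℙ]
    (M A : ℕ) (α : ℝ) (hM : 2 ≤ M) (hAM : A ≤ M)
    (hα : (A : ℝ) = α * M) (hα0 : 0 < α)
    (N : ℕ → Ω → ℕ) (hmeas : ∀ t, Measurable (N t))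
    (hmarkov : ∀ (t : ℕ) (a : ℕ → ℕ) (m : ℕ),
      ℙ {ω | (∀ i ≤ t, N i ω = a i) ∧ N (t + 1) ω = m} =
        ℙ {ω | ∀ i ≤ t, N i ω = a i} * ENNReal.ofReal (chainStep M A (a t) m))
    (k : ℕ) (hk : k ≤ M) (hinit : ℙ {ω | N 0 ω = k} = 1) :
    (∀ m : ℕ, chainStep M A 0 m = if m = 0 then 1 else 0) ∧
    (∀ m : ℕ, chainStep M A M m = if m = M then 1 else 0) ∧
    ℙ {ω | ∃ t, N t ω = 0 ∨ N t ω = M} = 1 ∧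
    ℙ {ω | (∃ t, N t ω = 0 ∨ N t ω = M) ∧
          N (sInf {t | N t ω = 0 ∨ N t ω = M}) ω = 0} =
      ENNReal.ofReal (1 - (k : ℝ) / (M : ℝ)) := by
  have hA : 1 ≤ A := by
    have : (0 : ℝ) < A := hα ▸ mul_pos hα0 (by exact_mod_cast (by omega : 0 < M))
    exact_mod_cast this
  have hp := isMartingaleKernel_chainStep hAM (by omega)
  have hdown := chainStep_pred_pos (M := M) hA
  have hN : IsMarkovChain ℙ N (chainStep M A) := hmarkov
  exact ⟨hp.apply_zero, hp.apply_top,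
    hN.measure_absorption hmeas hp hM hdown hk hinit,
    hN.measure_extinction hmeas hp hM hdown hk hinit⟩

open MeasureTheory in
/-- Suppose `0 < α ≤ 1`. For the mixed-environment count chain the
states `0` and `M` are absorbing; letting `τ = inf {t ≥ 0 : n(t) ∈ {0, M}}`, one has
`τ < ∞` almost surely, and for every starting state `k ∈ {0,…,M}`,
`P(n(τ) = 0 | n(0) = k) = 1 − k/M`.  In particular the extinction probability does not
depend on `α`.

The chain is formalised as a process `N : ℕ → Ω → ℕ` on a probability space whose
one-step law, given the whole past, is `chainStep M A (current state)` (the Markov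
property `hmarkov`), started from `k` (`hinit`). -/
theorem absorption_and_extinction_probability
    {Ω : Type*} [MeasurableSpace Ω] (ℙ : Measure Ω) [IsProbabilityMeasure ℙ]
    (M A : ℕ) (α : ℝ) (hM : 2 ≤ M) (hAM : A ≤ M)
    (hα : (A : ℝ) = α * M) (hα0 : 0 < α) (hα1 : α ≤ 1)
    (N : ℕ → Ω → ℕ) (hmeas : ∀ t, Measurable (N t))
    (hmarkov : ∀ (t : ℕ) (a : ℕ → ℕ) (m : ℕ),
      ℙ {ω | (∀ i ≤ t, N i ω = a i) ∧ N (t + 1) ω = m} =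
        ℙ {ω | ∀ i ≤ t, N i ω = a i} * ENNReal.ofReal (chainStep M A (a t) m))
    (k : ℕ) (hk : k ≤ M) (hinit : ℙ {ω | N 0 ω = k} = 1) :
    (∀ m : ℕ, chainStep M A 0 m = if m = 0 then 1 else 0) ∧
    (∀ m : ℕ, chainStep M A M m = if m = M then 1 else 0) ∧
    ℙ {ω | ∃ t, N t ω = 0 ∨ N t ω = M} = 1 ∧
    ℙ {ω | (∃ t, N t ω = 0 ∨ N t ω = M) ∧
          N (sInf {t | N t ω = 0 ∨ N t ω = M}) ω = 0} =
      ENNReal.ofReal (1 - (k : ℝ) / (M : ℝ)) :=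
  absorption_and_extinction_probability_general ℙ M A α hM hAM hα hα0 N hmeas hmarkov k hk hinit
end

section
/- Let ρ be an n-gram distribution with L(c) > 0 for every context c ∈ Σ^{n−1}. Define π(c) = L(c), p(a | c) = ρ(c·a)/L(c), and the context transition kernel K_p(c, c') = Σ_{a : σ(c,a) = c'} p(a | c). Then π is a stationary distribution of K_p (i.e., Σ_c π(c) K_p(c, c') = π(c') for all c') if and only if ρ satisfies flow balance; and in that case π(c)·p(a | c) = ρ(c·a) for all c and a, so the rollout of the induced continuation law reproduces ρ. -/
/-!
`n`-gram distributions and flow balance on the de Bruijn graph.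

We fix a finite alphabet `σ` with `s = |σ| ≥ 2` and an order `n = k + 1 ≥ 2`
(so contexts have length `k = n − 1 ≥ 1`).  An `n`-gram is a function
`Fin (k+1) → σ`; a context is a function `Fin k → σ`.  For an `n`-gram `g`,
`gInit g` is its length-`k` prefix (the source vertex of the corresponding
de Bruijn edge) and `gTail g` its length-`k` suffix (the target vertex).
The `n`-gram `c·a` is `Fin.snoc c a` and `x·c` is `Fin.cons x c`; the shift
`σ(c,a)` is `gTail (Fin.snoc c a)`.
-/

open Finset

variable {σ : Type*}

/-- Length-`k` prefix of an `n`-gram (`n = k+1`): the source vertex of the edge. -/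
def gInit {k : ℕ} (g : Fin (k + 1) → σ) : Fin k → σ := fun i => g i.castSucc

/-- Length-`k` suffix of an `n`-gram: the target vertex of the edge; also the
shift map, `σ(c,a) = gTail (Fin.snoc c a)`. -/
def gTail {k : ℕ} (g : Fin (k + 1) → σ) : Fin k → σ := fun i => g i.succ

/-- An `n`-gram distribution: nonnegative and summing to `1`. -/
def IsDist [Fintype σ] [DecidableEq σ] {k : ℕ} (ρ : (Fin (k + 1) → σ) → ℝ) : Prop :=
  (∀ g, 0 ≤ ρ g) ∧ ∑ g, ρ g = 1

/-- `L(c) = Σ_a ρ(c·a)`: mass of `n`-grams beginning with context `c`. -/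
def Lmass [Fintype σ] [DecidableEq σ] {k : ℕ}
    (ρ : (Fin (k + 1) → σ) → ℝ) (c : Fin k → σ) : ℝ :=
  ∑ a, ρ (Fin.snoc c a)

/-- `R(c) = Σ_x ρ(x·c)`: mass of `n`-grams ending with context `c`. -/
def Rmass [Fintype σ] [DecidableEq σ] {k : ℕ}
    (ρ : (Fin (k + 1) → σ) → ℝ) (c : Fin k → σ) : ℝ :=
  ∑ x, ρ (Fin.cons x c)

/-- Flow balance: `L(c) = R(c)` for every context `c`. -/
def FlowBalance [Fintype σ] [DecidableEq σ] {k : ℕ}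
    (ρ : (Fin (k + 1) → σ) → ℝ) : Prop :=
  ∀ c, Lmass ρ c = Rmass ρ c

/-- The polytope `F_n` of `n`-gram distributions satisfying flow balance
(the circulation polytope of the de Bruijn graph `B(n−1,s)`). -/
def FlowPolytope (σ : Type*) [Fintype σ] [DecidableEq σ] (k : ℕ) :
    Set ((Fin (k + 1) → σ) → ℝ) :=
  {ρ | IsDist ρ ∧ FlowBalance ρ}

/-- A simple directed cycle in the de Bruijn graph `B(n−1,s)`: a cyclically ordered
list of `p ≥ 1` edges (`n`-grams) whose sources are pairwise distinct vertices and in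
which the target of each edge is the source of the next. -/
structure SimpleCycle (σ : Type*) (k : ℕ) where
  /-- number of edges (`n`-grams) traversed -/
  p : ℕ
  ppos : 0 < p
  /-- the traversed edges, in cyclic order -/
  edge : Fin p → (Fin (k + 1) → σ)
  /-- the cycle is simple: visited vertices are pairwise distinct -/
  simple : Function.Injective fun i => gInit (edge i)
  /-- consecutive edges are incident head-to-tail (cyclically) -/
  cyc : ∀ i : Fin p,
    gTail (edge i) = gInit (edge ⟨(i.val + 1) % p, Nat.mod_lt _ i.pos⟩)

attribute [local instance] Classical.propDecidable

/-- The cycle flow `f_γ`: the uniform distribution assigning mass `1/p` to each of the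
`p` `n`-grams traversed by the simple cycle `γ`, and `0` to all others. -/
noncomputable def cycleFlow {σ : Type*} {k : ℕ} (γ : SimpleCycle σ k) :
    (Fin (k + 1) → σ) → ℝ :=
  fun g => if g ∈ Set.range γ.edge then 1 / (γ.p : ℝ) else 0

/-- The induced continuation law `p(a | c) = ρ(c·a) / L(c)`. -/
noncomputable def contLaw [Fintype σ] [DecidableEq σ] {k : ℕ}
    (ρ : (Fin (k + 1) → σ) → ℝ) (a : σ) (c : Fin k → σ) : ℝ :=
  ρ (Fin.snoc c a) / Lmass ρ c

/-- The context transition kernel `K_p(c, c') = Σ_{a : σ(c,a) = c'} p(a | c)`. -/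
noncomputable def ctxKernel [Fintype σ] [DecidableEq σ] {k : ℕ}
    (ρ : (Fin (k + 1) → σ) → ℝ) (c c' : Fin k → σ) : ℝ :=
  ∑ a, if gTail (Fin.snoc c a) = c' then contLaw ρ a c else 0

/-! Weighting the kernel by `π = L` cancels the normalisation in `p(a | c)`, so
`π(c) K_p(c, c')` is the mass of the `n`-grams `c·a` ending in `c'`. Summing over `c`
counts every `n`-gram ending in `c'` once, hence `π K_p = R` and stationarity is `R = L`. -/

section Tuples

variable {α M : Type*} [AddCommMonoid M] {k : ℕ}

@[simp]
theorem gTail_cons (x : α) (c : Fin k → α) : gTail (Fin.cons x c : Fin (k + 1) → α) = c :=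
  rfl

variable [Fintype α]

theorem sum_sum_snoc (f : (Fin (k + 1) → α) → M) :
    ∑ c : Fin k → α, ∑ a, f (Fin.snoc c a) = ∑ g, f g := by
  rw [← (Fin.snocEquiv fun _ => α).sum_comp, Fintype.sum_prod_type, Finset.sum_comm]
  rfl

theorem sum_sum_cons (f : (Fin (k + 1) → α) → M) :
    ∑ x, ∑ c : Fin k → α, f (Fin.cons x c) = ∑ g, f g := by
  rw [← (Fin.consEquiv fun _ => α).sum_comp, Fintype.sum_prod_type]
  rfl

theorem sum_ite_gTail_eq [DecidableEq (Fin k → α)] (f : (Fin (k + 1) → α) → M)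
    (c' : Fin k → α) :
    ∑ g, (if gTail g = c' then f g else 0) = ∑ x, f (Fin.cons x c') := by
  rw [← sum_sum_cons]
  refine Finset.sum_congr rfl fun x _ => ?_
  rw [Fintype.sum_eq_single c' fun c hc => by rw [gTail_cons, if_neg hc], gTail_cons, if_pos rfl]

end Tuples

section Kernel

variable [Fintype σ] [DecidableEq σ] {k : ℕ} (ρ : (Fin (k + 1) → σ) → ℝ)

theorem Lmass_mul_contLaw {c : Fin k → σ} (hc : Lmass ρ c ≠ 0) (a : σ) :
    Lmass ρ c * contLaw ρ a c = ρ (Fin.snoc c a) :=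
  mul_div_cancel₀ _ hc

theorem Lmass_mul_ctxKernel {c : Fin k → σ} (hc : Lmass ρ c ≠ 0) (c' : Fin k → σ) :
    Lmass ρ c * ctxKernel ρ c c' =
      ∑ a, if gTail (Fin.snoc c a) = c' then ρ (Fin.snoc c a) else 0 := by
  rw [ctxKernel, Finset.mul_sum]
  simp only [mul_ite, mul_zero, Lmass_mul_contLaw ρ hc]

theorem sum_Lmass_mul_ctxKernel (hL : ∀ c, Lmass ρ c ≠ 0) (c' : Fin k → σ) :
    ∑ c, Lmass ρ c * ctxKernel ρ c c' = Rmass ρ c' := by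
  simp only [Lmass_mul_ctxKernel ρ (hL _)]
  rw [sum_sum_snoc fun g => if gTail g = c' then ρ g else 0, sum_ite_gTail_eq, Rmass]

end Kernel

theorem stationary_iff_flowBalance_general [Fintype σ] [DecidableEq σ]
    (k : ℕ)
    (ρ : (Fin (k + 1) → σ) → ℝ)
    (hL : ∀ c, 0 < Lmass ρ c) :
    ((∀ c', ∑ c, Lmass ρ c * ctxKernel ρ c c' = Lmass ρ c') ↔ FlowBalance ρ) ∧
    (FlowBalance ρ →
      ∀ (c : Fin k → σ) (a : σ), Lmass ρ c * contLaw ρ a c = ρ (Fin.snoc c a)) := by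
  have hπK := sum_Lmass_mul_ctxKernel ρ fun c => (hL c).ne'
  refine ⟨forall_congr' fun c' => ?_, fun _ c => Lmass_mul_contLaw ρ (hL c).ne'⟩
  rw [hπK, eq_comm]

/-- Let `ρ` be an `n`-gram distribution with `L(c) > 0` for every
context `c`.  With `π(c) = L(c)`, `p(a|c) = ρ(c·a)/L(c)` and the context kernel
`K_p(c,c') = Σ_{a : σ(c,a) = c'} p(a|c)`: the distribution `π` is stationary for `K_p`
if and only if `ρ` satisfies flow balance; and in that case
`π(c)·p(a|c) = ρ(c·a)` for all `c, a`, so the rollout of the induced continuation law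
reproduces `ρ`. -/
theorem stationary_iff_flowBalance [Fintype σ] [DecidableEq σ]
    (k : ℕ) (hk : 1 ≤ k) (hs : 2 ≤ Fintype.card σ)
    (ρ : (Fin (k + 1) → σ) → ℝ) (hρ : IsDist ρ)
    (hL : ∀ c, 0 < Lmass ρ c) :
    ((∀ c', ∑ c, Lmass ρ c * ctxKernel ρ c c' = Lmass ρ c') ↔ FlowBalance ρ) ∧
    (FlowBalance ρ →
      ∀ (c : Fin k → σ) (a : σ), Lmass ρ c * contLaw ρ a c = ρ (Fin.snoc c a)) :=
  stationary_iff_flowBalance_general k ρ hL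
end

section
/- For every simple directed cycle γ in the de Bruijn graph B(n−1,s), the cycle flow f_γ is an extreme point of the polytope F_n: if f_γ = λ f₁ + (1−λ) f₂ with f₁, f₂ ∈ F_n and 0 < λ < 1, then f₁ = f₂ = f_γ. Moreover, distinct simple directed cycles (distinct edge sets, identifying rotations) yield distinct cycle flows. -/
/-!
`n`-gram distributions and flow balance on the de Bruijn graph.

We fix a finite alphabet `σ` with `s = |σ| ≥ 2` and an order `n = k + 1 ≥ 2`
(so contexts have length `k = n − 1 ≥ 1`).  An `n`-gram is a function
`Fin (k+1) → σ`; a context is a function `Fin k → σ`.  For an `n`-gram `g`,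
`gInit g` is its length-`k` prefix (the source vertex of the corresponding
de Bruijn edge) and `gTail g` its length-`k` suffix (the target vertex).
The `n`-gram `c·a` is `Fin.snoc c a` and `x·c` is `Fin.cons x c`; the shift
`σ(c,a)` is `gTail (Fin.snoc c a)`.
-/

open Finset

variable {σ : Type*}

attribute [local instance] Classical.propDecidable

/-!
A decomposition `f_γ = λ f₁ + (1 - λ) f₂` into nonnegative `f₁, f₂` forces both to vanish off
the edges of `γ`. On a flow supported by a simple cycle, each vertex of the cycle has exactly one
incoming and one outgoing edge in the support, so flow balance says that consecutive edges carry
equal mass; being constant along the cycle and of total mass `1`, such a flow is `f_γ`. Distinct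
cycles give distinct flows because the support of `f_γ` is the edge set of `γ`.
-/

open Function

namespace Fin

variable {p : ℕ}

/-- Definitionally the successor index of `SimpleCycle.cyc`. -/
def cycSucc (i : Fin p) : Fin p := ⟨(i.val + 1) % p, Nat.mod_lt _ i.pos⟩

lemma cycSucc_injective : Injective (cycSucc (p := p)) := by
  intro i j h
  have hmod : i.val ≡ j.val [MOD p] := Nat.ModEq.add_right_cancel' 1 (congrArg Fin.val h)
  ext
  rwa [Nat.ModEq, Nat.mod_eq_of_lt i.isLt, Nat.mod_eq_of_lt j.isLt] at hmod

lemma cycSucc_surjective : Surjective (cycSucc (p := p)) :=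
  Finite.injective_iff_surjective.mp cycSucc_injective

lemma eq_of_apply_cycSucc_eq {α : Type*} {h : Fin p → α} (hh : ∀ i, h (cycSucc i) = h i)
    (i : Fin p) : h i = h ⟨0, i.pos⟩ := by
  obtain ⟨m, hm⟩ := i
  induction m with
  | zero => rfl
  | succ m ih =>
    have hsucc : cycSucc ⟨m, by omega⟩ = ⟨m + 1, hm⟩ := Fin.ext (Nat.mod_eq_of_lt hm)
    rw [← hsucc, hh, ih]

end Fin

lemma gInit_eq_init {k : ℕ} (g : Fin (k + 1) → σ) : gInit g = Fin.init g := rfl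

lemma gTail_eq_tail {k : ℕ} (g : Fin (k + 1) → σ) : gTail g = Fin.tail g := rfl

lemma support_subset_of_eq_smul_add_smul {α : Type*} {f f₁ f₂ : α → ℝ} {a b : ℝ}
    (h₁ : 0 ≤ f₁) (h₂ : 0 ≤ f₂) (ha : 0 < a) (hb : 0 ≤ b) (hf : a • f₁ + b • f₂ = f) :
    support f₁ ⊆ support f := by
  intro x hx hfx
  have hsum : a * f₁ x + b * f₂ x = 0 := by simpa [← hf] using hfx
  have hterm := ((add_eq_zero_iff_of_nonneg (mul_nonneg ha.le (h₁ x))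
    (mul_nonneg hb (h₂ x))).mp hsum).1
  exact hx ((mul_eq_zero.mp hterm).resolve_left ha.ne')

namespace SimpleCycle

variable {k : ℕ} (γ : SimpleCycle σ k)

lemma edge_injective : Injective γ.edge :=
  fun _ _ h => γ.simple (congrArg gInit h)

lemma gTail_edge (i : Fin γ.p) : gTail (γ.edge i) = gInit (γ.edge i.cycSucc) := γ.cyc i

lemma gTail_edge_injective : Injective fun i => gTail (γ.edge i) := by
  intro i j h
  simp only [gTail_edge] at h
  exact Fin.cycSucc_injective (γ.simple h)

lemma support_cycleFlow : support (cycleFlow γ) = Set.range γ.edge := by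
  ext g
  have hp : (γ.p : ℝ) ≠ 0 := Nat.cast_ne_zero.mpr γ.ppos.ne'
  by_cases hg : g ∈ Set.range γ.edge <;> simp [cycleFlow, hg, hp]

lemma cycleFlow_edge (i : Fin γ.p) : cycleFlow γ (γ.edge i) = 1 / γ.p :=
  if_pos ⟨i, rfl⟩

variable [Fintype σ] {γ} {f : (Fin (k + 1) → σ) → ℝ}

lemma sum_eq_sum_edge (hf : support f ⊆ Set.range γ.edge) :
    ∑ g, f g = ∑ i, f (γ.edge i) :=
  (Fintype.sum_of_injective γ.edge γ.edge_injective _ f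
    (support_subset_iff'.mp hf) fun _ => rfl).symm

variable [DecidableEq σ]

lemma Lmass_gInit_edge (hf : support f ⊆ Set.range γ.edge) (i : Fin γ.p) :
    Lmass f (gInit (γ.edge i)) = f (γ.edge i) := by
  rw [Lmass, Finset.sum_eq_single (γ.edge i (Fin.last k))]
  · rw [gInit_eq_init, Fin.snoc_init_self]
  · intro a _ ha
    refine notMem_support.mp fun hmem => ha ?_
    obtain ⟨j, hj⟩ := hf hmem
    have hji : j = i := γ.simple (by simp only [hj, gInit_eq_init, Fin.init_snoc])
    rw [← hji, hj, Fin.snoc_last]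
  · simp

lemma Rmass_gTail_edge (hf : support f ⊆ Set.range γ.edge) (i : Fin γ.p) :
    Rmass f (gTail (γ.edge i)) = f (γ.edge i) := by
  rw [Rmass, Finset.sum_eq_single (γ.edge i 0)]
  · rw [gTail_eq_tail, Fin.cons_self_tail]
  · intro x _ hx
    refine notMem_support.mp fun hmem => hx ?_
    obtain ⟨j, hj⟩ := hf hmem
    have hji : j = i :=
      γ.gTail_edge_injective (by simp only [hj, gTail_eq_tail, Fin.tail_cons])
    rw [← hji, hj, Fin.cons_zero]
  · simp

lemma Lmass_eq_zero (hf : support f ⊆ Set.range γ.edge) {c : Fin k → σ}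
    (hc : c ∉ Set.range fun i => gInit (γ.edge i)) : Lmass f c = 0 := by
  refine Finset.sum_eq_zero fun a _ => notMem_support.mp fun hmem => hc ?_
  obtain ⟨j, hj⟩ := hf hmem
  exact ⟨j, by simp only [hj, gInit_eq_init, Fin.init_snoc]⟩

lemma Rmass_eq_zero (hf : support f ⊆ Set.range γ.edge) {c : Fin k → σ}
    (hc : c ∉ Set.range fun i => gInit (γ.edge i)) : Rmass f c = 0 := by
  refine Finset.sum_eq_zero fun x _ => notMem_support.mp fun hmem => hc ?_
  obtain ⟨j, hj⟩ := hf hmem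
  exact ⟨j.cycSucc, show gInit _ = c by rw [← gTail_edge, hj, gTail_eq_tail, Fin.tail_cons]⟩

/-- Each vertex of `γ` has exactly one incoming and one outgoing edge of `γ`, so the balance
there compares the masses of two consecutive edges. -/
lemma flowBalance_iff (hf : support f ⊆ Set.range γ.edge) :
    FlowBalance f ↔ ∀ i, f (γ.edge i.cycSucc) = f (γ.edge i) := by
  constructor
  · intro hbal i
    rw [← Lmass_gInit_edge hf, hbal, ← gTail_edge, Rmass_gTail_edge hf]
  · intro hconst c
    by_cases hc : c ∈ Set.range fun i => gInit (γ.edge i)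
    · obtain ⟨j, rfl⟩ : ∃ j, gInit (γ.edge j) = c := hc
      obtain ⟨i, rfl⟩ := Fin.cycSucc_surjective j
      rw [Lmass_gInit_edge hf, hconst, ← gTail_edge, Rmass_gTail_edge hf]
    · rw [Lmass_eq_zero hf hc, Rmass_eq_zero hf hc]

variable (γ) in
lemma cycleFlow_mem_flowPolytope : cycleFlow γ ∈ FlowPolytope σ k := by
  have hp : (γ.p : ℝ) ≠ 0 := Nat.cast_ne_zero.mpr γ.ppos.ne'
  have hsupp := γ.support_cycleFlow.le
  refine ⟨⟨fun g => ?_, ?_⟩, (flowBalance_iff hsupp).mpr fun i => ?_⟩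
  · unfold cycleFlow
    split <;> positivity
  · simp [sum_eq_sum_edge hsupp, cycleFlow_edge, hp]
  · rw [cycleFlow_edge, cycleFlow_edge]

lemma eq_cycleFlow_of_support_subset (hf : f ∈ FlowPolytope σ k)
    (hsupp : support f ⊆ Set.range γ.edge) : f = cycleFlow γ := by
  obtain ⟨⟨-, hsum⟩, hbal⟩ := hf
  set i₀ : Fin γ.p := ⟨0, γ.ppos⟩
  have hconst (i : Fin γ.p) : f (γ.edge i) = f (γ.edge i₀) :=
    Fin.eq_of_apply_cycSucc_eq (h := fun i => f (γ.edge i)) ((flowBalance_iff hsupp).mp hbal) i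
  have hp : (γ.p : ℝ) ≠ 0 := Nat.cast_ne_zero.mpr γ.ppos.ne'
  have hval : f (γ.edge i₀) = 1 / γ.p := by
    rw [sum_eq_sum_edge hsupp, Finset.sum_congr rfl fun i _ => hconst i] at hsum
    simp only [Finset.sum_const, Finset.card_univ, Fintype.card_fin, nsmul_eq_mul] at hsum
    field_simp
    linarith
  funext g
  by_cases hg : g ∈ Set.range γ.edge
  · obtain ⟨i, rfl⟩ := hg
    rw [hconst, hval, cycleFlow_edge]
  · rw [support_subset_iff'.mp hsupp g hg, support_subset_iff'.mp γ.support_cycleFlow.le g hg]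

variable (γ) in
lemma cycleFlow_mem_extremePoints :
    cycleFlow γ ∈ Set.extremePoints ℝ (FlowPolytope σ k) := by
  refine mem_extremePoints.mpr ⟨cycleFlow_mem_flowPolytope γ, ?_⟩
  rintro f₁ hf₁ f₂ hf₂ ⟨a, b, ha, hb, -, hab⟩
  have hsupp₁ := support_subset_of_eq_smul_add_smul hf₁.1.1 hf₂.1.1 ha hb.le hab
  have hsupp₂ := support_subset_of_eq_smul_add_smul hf₂.1.1 hf₁.1.1 hb ha.le
    ((add_comm _ _).trans hab)
  rw [support_cycleFlow] at hsupp₁ hsupp₂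
  exact ⟨eq_cycleFlow_of_support_subset hf₁ hsupp₁, eq_cycleFlow_of_support_subset hf₂ hsupp₂⟩

end SimpleCycle

theorem cycleFlow_extremePoint_general [Fintype σ] [DecidableEq σ]
    (k : ℕ) (γ : SimpleCycle σ k) :
    cycleFlow γ ∈ FlowPolytope σ k ∧
    (∀ f₁ ∈ FlowPolytope σ k, ∀ f₂ ∈ FlowPolytope σ k, ∀ l : ℝ, 0 < l → l < 1 →
      cycleFlow γ = l • f₁ + (1 - l) • f₂ → f₁ = cycleFlow γ ∧ f₂ = cycleFlow γ) ∧
    cycleFlow γ ∈ Set.extremePoints ℝ (FlowPolytope σ k) ∧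
    (∀ γ' : SimpleCycle σ k, Set.range γ.edge ≠ Set.range γ'.edge →
      cycleFlow γ ≠ cycleFlow γ') := by
  have hext := γ.cycleFlow_mem_extremePoints
  refine ⟨γ.cycleFlow_mem_flowPolytope, fun f₁ hf₁ f₂ hf₂ l hl hl1 heq => ?_, hext, ?_⟩
  · exact (mem_extremePoints.mp hext).2 f₁ hf₁ f₂ hf₂
      ⟨l, 1 - l, hl, sub_pos.mpr hl1, add_sub_cancel _ _, heq.symm⟩
  · intro γ' hne heq
    exact hne (by rw [← γ.support_cycleFlow, ← γ'.support_cycleFlow, heq])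

/-- For every simple directed cycle `γ` in the de Bruijn graph
`B(n−1,s)`, the cycle flow `f_γ` is a member and an extreme point of the polytope
`F_n`: if `f_γ = λ·f₁ + (1−λ)·f₂` with `f₁, f₂ ∈ F_n` and `0 < λ < 1`, then
`f₁ = f₂ = f_γ`.  Moreover, distinct simple directed cycles (distinct traversed edge
sets, which identifies rotations) yield distinct cycle flows. -/
theorem cycleFlow_extremePoint [Fintype σ] [DecidableEq σ]
    (k : ℕ) (hk : 1 ≤ k) (hs : 2 ≤ Fintype.card σ)
    (γ : SimpleCycle σ k) :
    cycleFlow γ ∈ FlowPolytope σ k ∧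
    (∀ f₁ ∈ FlowPolytope σ k, ∀ f₂ ∈ FlowPolytope σ k, ∀ l : ℝ, 0 < l → l < 1 →
      cycleFlow γ = l • f₁ + (1 - l) • f₂ → f₁ = cycleFlow γ ∧ f₂ = cycleFlow γ) ∧
    cycleFlow γ ∈ Set.extremePoints ℝ (FlowPolytope σ k) ∧
    (∀ γ' : SimpleCycle σ k, Set.range γ.edge ≠ Set.range γ'.edge →
      cycleFlow γ ≠ cycleFlow γ') :=
  cycleFlow_extremePoint_general k γ
end

section
/- For the binary alphabet Σ = {0,1} and order n = 3, the polytope of trigram distributions satisfying flow balance is a 4-dimensional convex polytope with exactly six extreme points. Writing trigram distributions as vectors on (000,001,010,011,100,101,110,111), the six extreme points are: (1,0,0,0,0,0,0,0); (0,0,0,0,0,0,0,1); (0,0,1/2,0,0,1/2,0,0); (0,1/3,1/3,0,1/3,0,0,0); (0,0,0,1/3,0,1/3,1/3,0); and (0,1/4,0,1/4,1/4,0,1/4,0). Each extreme point is the trigram distribution of a periodic binary sequence in which each visited length-2 context has a unique next token. -/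
/-!
`n`-gram distributions and flow balance on the de Bruijn graph.

We fix a finite alphabet `σ` with `s = |σ| ≥ 2` and an order `n = k + 1 ≥ 2`
(so contexts have length `k = n − 1 ≥ 1`).  An `n`-gram is a function
`Fin (k+1) → σ`; a context is a function `Fin k → σ`.  For an `n`-gram `g`,
`gInit g` is its length-`k` prefix (the source vertex of the corresponding
de Bruijn edge) and `gTail g` its length-`k` suffix (the target vertex).
The `n`-gram `c·a` is `Fin.snoc c a` and `x·c` is `Fin.cons x c`; the shift
`σ(c,a)` is `gTail (Fin.snoc c a)`.
-/

open Finset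

variable {σ : Type*}

attribute [local instance] Classical.propDecidable

/-- Vertex `(1,0,0,0,0,0,0,0)`: the constant sequence `…000…`. -/
noncomputable def V1 : (Fin 3 → Fin 2) → ℝ := fun g => if g = ![0, 0, 0] then 1 else 0

/-- Vertex `(0,0,0,0,0,0,0,1)`: the constant sequence `…111…`. -/
noncomputable def V2 : (Fin 3 → Fin 2) → ℝ := fun g => if g = ![1, 1, 1] then 1 else 0

/-- Vertex `(0,0,1/2,0,0,1/2,0,0)`: the alternating sequence `…0101…`. -/
noncomputable def V3 : (Fin 3 → Fin 2) → ℝ :=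
  fun g => if g = ![0, 1, 0] ∨ g = ![1, 0, 1] then 1 / 2 else 0

/-- Vertex `(0,1/3,1/3,0,1/3,0,0,0)`: the period-3 sequence `…001001…`. -/
noncomputable def V4 : (Fin 3 → Fin 2) → ℝ :=
  fun g => if g = ![0, 0, 1] ∨ g = ![0, 1, 0] ∨ g = ![1, 0, 0] then 1 / 3 else 0

/-- Vertex `(0,0,0,1/3,0,1/3,1/3,0)`: the period-3 sequence `…011011…`. -/
noncomputable def V5 : (Fin 3 → Fin 2) → ℝ :=
  fun g => if g = ![0, 1, 1] ∨ g = ![1, 0, 1] ∨ g = ![1, 1, 0] then 1 / 3 else 0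

/-- Vertex `(0,1/4,0,1/4,1/4,0,1/4,0)`: the period-4 sequence `…00110011…`. -/
noncomputable def V6 : (Fin 3 → Fin 2) → ℝ :=
  fun g => if g = ![0, 0, 1] ∨ g = ![0, 1, 1] ∨ g = ![1, 0, 0] ∨ g = ![1, 1, 0]
    then 1 / 4 else 0

/-!
Flow balance for binary trigrams amounts to three linear equations: `ρ 001 = ρ 100`,
`ρ 011 = ρ 110` and `ρ 010 + ρ 011 = ρ 001 + ρ 101`. Subtracting the largest possible
multiple `min (ρ 001) (ρ 011)` of the 4-cycle flow `V6` leaves a flow that is a nonnegative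
combination of the loops `V1`, `V2`, the 2-cycle `V3` and one of the 3-cycles `V4`, `V5`, so
the polytope is the convex hull of `V1, …, V6`. Each `Vi` is the only point of the polytope
whose support lies in that of `Vi`, hence extreme. Finally `V1, V2, V3, V4, V6` are affinely
independent while `3 V4 + 3 V5 = 2 V3 + 4 V6`, so the polytope has dimension `4`.
-/

theorem convex_flowPolytope (σ : Type*) [Fintype σ] [DecidableEq σ] (k : ℕ) :
    Convex ℝ (FlowPolytope σ k) := by
  rintro x ⟨⟨hx0, hx1⟩, hxb⟩ y ⟨⟨hy0, hy1⟩, hyb⟩ a b ha hb hab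
  refine ⟨⟨fun g => ?_, ?_⟩, fun c => ?_⟩
  · simp only [Pi.add_apply, Pi.smul_apply, smul_eq_mul]
    exact add_nonneg (mul_nonneg ha (hx0 g)) (mul_nonneg hb (hy0 g))
  · simp [sum_add_distrib, ← mul_sum, hx1, hy1, hab]
  · have hx := hxb c
    have hy := hyb c
    simp only [Lmass, Rmass, Pi.add_apply, Pi.smul_apply, smul_eq_mul, sum_add_distrib,
      ← mul_sum] at hx hy ⊢
    rw [hx, hy]

theorem mem_extremePoints_of_forall_support_subset {ι 𝕜 : Type*} [Field 𝕜] [LinearOrder 𝕜]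
    [IsStrictOrderedRing 𝕜] {S : Set (ι → 𝕜)} {v : ι → 𝕜} (hS : ∀ x ∈ S, 0 ≤ x) (hv : v ∈ S)
    (huniq : ∀ x ∈ S, Function.support x ⊆ Function.support v → x = v) :
    v ∈ Set.extremePoints 𝕜 S := by
  refine ⟨hv, fun x₁ hx₁ x₂ hx₂ ⟨a, b, ha, hb, _, hv'⟩ =>
    huniq x₁ hx₁ (Function.support_subset_iff'.2 fun i hi => ?_)⟩
  rw [Function.notMem_support] at hi
  have hsum : a * x₁ i + b * x₂ i = 0 := by rw [← hi, ← hv']; rfl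
  have h₁ := (add_eq_zero_iff_of_nonneg (mul_nonneg ha.le (hS x₁ hx₁ i))
    (mul_nonneg hb.le (hS x₂ hx₂ i))).1 hsum |>.1
  exact (mul_eq_zero.1 h₁).resolve_left ha.ne'

theorem affineIndependent_iff_of_fintype_module {k V ι : Type*} [Ring k] [AddCommGroup V]
    [Module k V] [Fintype ι] {p : ι → V} :
    AffineIndependent k p ↔ ∀ w : ι → k, ∑ i, w i = 0 → ∑ i, w i • p i = 0 → ∀ i, w i = 0 := by
  rw [affineIndependent_iff_of_fintype]
  refine forall₂_congr fun w hw => ?_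
  rw [Finset.weightedVSub_eq_linear_combination _ hw]

def cyclicSeq [Inhabited σ] (u : List σ) (i : ℕ) : σ := u.getD (i % u.length) default

theorem cyclicSeq_add_length [Inhabited σ] (u : List σ) (i : ℕ) :
    cyclicSeq u (i + u.length) = cyclicSeq u i := by
  simp [cyclicSeq]

namespace BinaryTrigram

theorem forall_trigram {P : (Fin 3 → Fin 2) → Prop} :
    (∀ g, P g) ↔ P ![0,0,0] ∧ P ![0,0,1] ∧ P ![0,1,0] ∧ P ![0,1,1] ∧
      P ![1,0,0] ∧ P ![1,0,1] ∧ P ![1,1,0] ∧ P ![1,1,1] := by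
  simp only [Fin.forall_fin_succ_pi, Fin.forall_fin_two, Fin.forall_fin_zero_pi, and_assoc]
  rfl

theorem sum_trigram {M : Type*} [AddCommMonoid M] (f : (Fin 3 → Fin 2) → M) :
    ∑ g, f g = f ![0,0,0] + f ![0,0,1] + f ![0,1,0] + f ![0,1,1] +
      f ![1,0,0] + f ![1,0,1] + f ![1,1,0] + f ![1,1,1] := by
  simp only [← (Fin.consEquiv _).sum_comp, Fintype.sum_prod_type, Fin.sum_univ_two,
    Fintype.sum_unique, add_assoc]
  rfl

theorem trigram_ext_iff {M : Type*} {ρ ρ' : (Fin 3 → Fin 2) → M} :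
    ρ = ρ' ↔ ρ ![0,0,0] = ρ' ![0,0,0] ∧ ρ ![0,0,1] = ρ' ![0,0,1] ∧ ρ ![0,1,0] = ρ' ![0,1,0] ∧
      ρ ![0,1,1] = ρ' ![0,1,1] ∧ ρ ![1,0,0] = ρ' ![1,0,0] ∧ ρ ![1,0,1] = ρ' ![1,0,1] ∧
      ρ ![1,1,0] = ρ' ![1,1,0] ∧ ρ ![1,1,1] = ρ' ![1,1,1] :=
  funext_iff.trans forall_trigram

theorem forall_context {P : (Fin 2 → Fin 2) → Prop} :
    (∀ c, P c) ↔ P ![0,0] ∧ P ![0,1] ∧ P ![1,0] ∧ P ![1,1] := by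
  simp only [Fin.forall_fin_succ_pi, Fin.forall_fin_two, Fin.forall_fin_zero_pi, and_assoc]
  rfl

theorem flowBalance_iff {ρ : (Fin 3 → Fin 2) → ℝ} :
    FlowBalance ρ ↔ ρ ![0,0,1] = ρ ![1,0,0] ∧ ρ ![0,1,1] = ρ ![1,1,0] ∧
      ρ ![0,1,0] + ρ ![0,1,1] = ρ ![0,0,1] + ρ ![1,0,1] := by
  simp only [FlowBalance, forall_context, Lmass, Rmass, Fin.sum_univ_two, Matrix.Fin.snoc_vecCons,
    Matrix.Fin.snoc_vecEmpty, Matrix.Fin.cons_vecCons]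
  constructor
  · rintro ⟨h00, h01, -, h11⟩
    exact ⟨by linarith, by linarith, by linarith⟩
  · rintro ⟨h₁, h₂, h₃⟩
    exact ⟨by linarith, by linarith, by linarith, by linarith⟩

theorem mem_flowPolytope_iff {ρ : (Fin 3 → Fin 2) → ℝ} :
    ρ ∈ FlowPolytope (Fin 2) 2 ↔ (∀ g, 0 ≤ ρ g) ∧
      ρ ![0,0,0] + ρ ![0,0,1] + ρ ![0,1,0] + ρ ![0,1,1] +
        ρ ![1,0,0] + ρ ![1,0,1] + ρ ![1,1,0] + ρ ![1,1,1] = 1 ∧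
      ρ ![0,0,1] = ρ ![1,0,0] ∧ ρ ![0,1,1] = ρ ![1,1,0] ∧
      ρ ![0,1,0] + ρ ![0,1,1] = ρ ![0,0,1] + ρ ![1,0,1] := by
  rw [FlowPolytope, Set.mem_ofPred_eq, IsDist, flowBalance_iff, sum_trigram, and_assoc]

theorem vertices_subset_flowPolytope :
    {V1, V2, V3, V4, V5, V6} ⊆ FlowPolytope (Fin 2) 2 := by
  rintro v (rfl | rfl | rfl | rfl | rfl | rfl) <;> rw [mem_flowPolytope_iff] <;>
    norm_num [forall_trigram, V1, V2, V3, V4, V5, V6]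

theorem pairwise_ne_vertices : List.Pairwise (· ≠ ·) [V1, V2, V3, V4, V5, V6] := by
  simp only [List.pairwise_cons, List.forall_mem_cons, List.mem_nil_iff, List.Pairwise.nil,
    IsEmpty.forall_iff, forall_const, and_true]
  simp [trigram_ext_iff, V1, V2, V3, V4, V5, V6]

theorem eq_of_support_subset {v ρ : (Fin 3 → Fin 2) → ℝ}
    (hv : v ∈ ({V1, V2, V3, V4, V5, V6} : Set _)) (hρ : ρ ∈ FlowPolytope (Fin 2) 2)
    (hsupp : Function.support ρ ⊆ Function.support v) : ρ = v := by
  obtain ⟨-, hsum, h₁, h₂, h₃⟩ := mem_flowPolytope_iff.1 hρ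
  have hzero : ∀ g, v g = 0 → ρ g = 0 := fun g hg => not_not.1 fun h => hsupp h hg
  obtain ⟨h000, h001, h010, h011, h100, h101, h110, h111⟩ := forall_trigram.1 hzero
  rw [trigram_ext_iff]
  rcases hv with rfl | rfl | rfl | rfl | rfl | rfl <;>
    refine ⟨?_, ?_, ?_, ?_, ?_, ?_, ?_, ?_⟩ <;>
    simp [V1, V2, V3, V4, V5, V6] at h000 h001 h010 h011 h100 h101 h110 h111 ⊢ <;> linarith

theorem mem_convexHull_vertices {ρ : (Fin 3 → Fin 2) → ℝ} (hρ : ρ ∈ FlowPolytope (Fin 2) 2) :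
    ρ ∈ convexHull ℝ {V1, V2, V3, V4, V5, V6} := by
  obtain ⟨hρ0, hsum, h₁, h₂, h₃⟩ := mem_flowPolytope_iff.1 hρ
  set m := min (ρ ![0,0,1]) (ρ ![0,1,1])
  have hm₀ : 0 ≤ m := le_min (hρ0 _) (hρ0 _)
  have hm₁ : m ≤ ρ ![0,0,1] := min_le_left _ _
  have hm₂ : m ≤ ρ ![0,1,1] := min_le_right _ _
  have hm₃ : ρ ![0,0,1] ≤ ρ ![0,1,0] + m := by
    obtain h | h : m = ρ ![0,0,1] ∨ m = ρ ![0,1,1] := min_choice _ _ <;>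
      linarith [hρ0 ![0,1,0], hρ0 ![1,0,1]]
  let w : Fin 6 → ℝ := ![ρ ![0,0,0], ρ ![1,1,1], 2 * (ρ ![0,1,0] - ρ ![0,0,1] + m),
    3 * (ρ ![0,0,1] - m), 3 * (ρ ![0,1,1] - m), 4 * m]
  have hw₀ : ∀ i ∈ univ, 0 ≤ w i := by
    intro i _
    fin_cases i <;> simp [w] <;> linarith [hρ0 ![0,0,0], hρ0 ![1,1,1]]
  have hw₁ : ∑ i, w i = 1 := by
    simp [w, Fin.sum_univ_six]
    linarith
  have hdecomp : ∑ i, w i • ![V1, V2, V3, V4, V5, V6] i = ρ := by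
    rw [trigram_ext_iff]
    refine ⟨?_, ?_, ?_, ?_, ?_, ?_, ?_, ?_⟩ <;>
      simp [w, Fin.sum_univ_six, V1, V2, V3, V4, V5, V6] <;> linarith
  rw [← hdecomp]
  exact (convex_convexHull ℝ _).sum_mem hw₀ hw₁ fun i _ =>
    subset_convexHull ℝ _ (by fin_cases i <;> simp)

theorem flowPolytope_eq_convexHull :
    FlowPolytope (Fin 2) 2 = convexHull ℝ {V1, V2, V3, V4, V5, V6} :=
  Set.Subset.antisymm (fun _ => mem_convexHull_vertices)
    (convexHull_min vertices_subset_flowPolytope (convex_flowPolytope _ _))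

theorem extremePoints_flowPolytope :
    Set.extremePoints ℝ (FlowPolytope (Fin 2) 2) = {V1, V2, V3, V4, V5, V6} := by
  refine Set.Subset.antisymm ?_ fun v hv => ?_
  · rw [flowPolytope_eq_convexHull]
    exact extremePoints_convexHull_subset
  · exact mem_extremePoints_of_forall_support_subset (fun ρ hρ => (mem_flowPolytope_iff.1 hρ).1)
      (vertices_subset_flowPolytope hv) fun ρ hρ => eq_of_support_subset hv hρ

theorem affineIndependent_vertices : AffineIndependent ℝ ![V1, V2, V3, V4, V6] := by
  rw [affineIndependent_iff_of_fintype_module]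
  intro w hw₀ hw₁ i
  rw [Fin.sum_univ_five] at hw₀
  rw [Fin.sum_univ_five, trigram_ext_iff] at hw₁
  obtain ⟨h000, h001, h010, -, -, h101, -, h111⟩ := hw₁
  fin_cases i <;> simp [V1, V2, V3, V4, V6] at h000 h001 h010 h101 h111 ⊢ <;> linarith

theorem V5_mem_affineSpan : V5 ∈ affineSpan ℝ (Set.range ![V1, V2, V3, V4, V6]) := by
  have hdir : (2 / 3 : ℝ) • (V3 -ᵥ V4) + (4 / 3 : ℝ) • (V6 -ᵥ V4) ∈
      (affineSpan ℝ (Set.range ![V1, V2, V3, V4, V6])).direction := by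
    rw [direction_affineSpan]
    exact add_mem (Submodule.smul_mem _ _ (vsub_mem_vectorSpan ℝ ⟨2, rfl⟩ ⟨3, rfl⟩))
      (Submodule.smul_mem _ _ (vsub_mem_vectorSpan ℝ ⟨4, rfl⟩ ⟨3, rfl⟩))
  have hV4 : V4 ∈ affineSpan ℝ (Set.range ![V1, V2, V3, V4, V6]) := subset_affineSpan ℝ _ ⟨3, rfl⟩
  convert AffineSubspace.vadd_mem_of_mem_direction hdir hV4 using 1
  rw [trigram_ext_iff]
  norm_num [V3, V4, V5, V6]

theorem finrank_direction_affineSpan_flowPolytope :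
    Module.finrank ℝ (affineSpan ℝ (FlowPolytope (Fin 2) 2)).direction = 4 := by
  have hV : ({V1, V2, V3, V4, V5, V6} : Set _) = insert V5 (Set.range ![V1, V2, V3, V4, V6]) := by
    ext v
    simp only [Set.mem_insert_iff, Set.mem_singleton_iff, Matrix.range_cons, Matrix.range_empty,
      Set.union_empty, Set.singleton_union]
    tauto
  rw [flowPolytope_eq_convexHull, affineSpan_convexHull, hV,
    affineSpan_insert_eq_affineSpan ℝ V5_mem_affineSpan, direction_affineSpan]
  exact affineIndependent_vertices.finrank_vectorSpan (by simp)

noncomputable def periodicTrigramDist (p : ℕ) (w : ℕ → Fin 2) : (Fin 3 → Fin 2) → ℝ :=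
  fun g => (∑ i ∈ Finset.range p,
    if ∀ t : Fin 3, w (i + (t : ℕ)) = g t then (1 : ℝ) else 0) / p

theorem exists_cyclic_word {v : (Fin 3 → Fin 2) → ℝ}
    (hv : v ∈ ({V1, V2, V3, V4, V5, V6} : Set _)) :
    ∃ u : List (Fin 2), u ≠ [] ∧
      (∀ i < u.length, ∀ j < u.length, cyclicSeq u i = cyclicSeq u j →
        cyclicSeq u (i + 1) = cyclicSeq u (j + 1) → cyclicSeq u (i + 2) = cyclicSeq u (j + 2)) ∧
      v = periodicTrigramDist u.length (cyclicSeq u) := by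
  rcases hv with rfl | rfl | rfl | rfl | rfl | rfl
  on_goal 1 => refine ⟨[0], by simp, by decide, ?_⟩
  on_goal 2 => refine ⟨[1], by simp, by decide, ?_⟩
  on_goal 3 => refine ⟨[0, 1], by simp, by decide, ?_⟩
  on_goal 4 => refine ⟨[0, 0, 1], by simp, by decide, ?_⟩
  on_goal 5 => refine ⟨[0, 1, 1], by simp, by decide, ?_⟩
  on_goal 6 => refine ⟨[0, 0, 1, 1], by simp, by decide, ?_⟩
  all_goals
    rw [trigram_ext_iff]
    simp only [periodicTrigramDist, List.length_cons, List.length_nil, sum_range_succ,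
      sum_range_zero]
    norm_num [Fin.forall_fin_succ, cyclicSeq, V1, V2, V3, V4, V5, V6]

end BinaryTrigram

/-- For the binary alphabet and order `n = 3` (contexts of length
`k = 2`), the polytope of trigram distributions satisfying flow balance is a
4-dimensional convex polytope with exactly six extreme points, namely
`V1, …, V6` above (which are pairwise distinct); and each extreme point is the trigram
distribution of a periodic binary sequence in which each visited length-2 context has
a unique next token. -/
theorem binary_trigram_polytope :
    Convex ℝ (FlowPolytope (Fin 2) 2) ∧
    Module.finrank ℝ (affineSpan ℝ (FlowPolytope (Fin 2) 2)).direction = 4 ∧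
    Set.extremePoints ℝ (FlowPolytope (Fin 2) 2) = {V1, V2, V3, V4, V5, V6} ∧
    List.Pairwise (· ≠ ·) [V1, V2, V3, V4, V5, V6] ∧
    (∀ ρ ∈ Set.extremePoints ℝ (FlowPolytope (Fin 2) 2),
      ∃ (p : ℕ) (_ : 0 < p) (w : ℕ → Fin 2),
        (∀ i, w (i + p) = w i) ∧
        (∀ i j, i < p → j < p → w i = w j → w (i + 1) = w (j + 1) →
          w (i + 2) = w (j + 2)) ∧
        ρ = fun g =>
          (∑ i ∈ Finset.range p,
            if (∀ t : Fin 3, w (i + (t : ℕ)) = g t) then (1 : ℝ) else 0) / p) := by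
  refine ⟨convex_flowPolytope _ _, BinaryTrigram.finrank_direction_affineSpan_flowPolytope,
    BinaryTrigram.extremePoints_flowPolytope, BinaryTrigram.pairwise_ne_vertices,
    fun ρ hρ => ?_⟩
  rw [BinaryTrigram.extremePoints_flowPolytope] at hρ
  obtain ⟨u, hu, hdet, rfl⟩ := BinaryTrigram.exists_cyclic_word hρ
  exact ⟨u.length, List.length_pos_of_ne_nil hu, cyclicSeq u, cyclicSeq_add_length u,
    fun i j hi hj => hdet i hi j hj, rfl⟩
end

section
/- For every alphabet size s ≥ 2 and every n ≥ 1 there exists a cyclic word w of length s^n over an alphabet Σ of size s whose s^n cyclic length-n windows are exactly the s^n distinct n-grams over Σ, each appearing exactly once (a cyclic de Bruijn word of order n). Moreover, any such cyclic word has primitive period exactly s^n. -/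
/-!
A cyclic de Bruijn word of order `n` is an Eulerian circuit of the de Bruijn multigraph whose
vertices are the `(n-1)`-grams and whose edges are the `n`-grams, the edge `e` running from its
prefix `Fin.init e` to its suffix `Fin.tail e`. Every vertex has `s` incoming and `s` outgoing
edges, and any two `n`-grams are joined by the windows of a word that starts with the first and
continues with the second, so Euler's theorem gives a circuit; the first letters of its edges
form the word. A period `d < s^n` would make the window at `0` reappear at `d`.

Euler's theorem is proved with a longest closed trail: if it misses an edge, connectivity gives
an unused edge leaving it, a longest trail of unused edges from there closes up because the
unused edges are still balanced, and splicing it in gives a longer closed trail.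
-/

open Finset

lemma Relation.ReflTransGen.exists_mem_notMem_rel {α : Type*} {r : α → α → Prop} {s : Set α}
    {a b : α} (h : Relation.ReflTransGen r a b) (ha : a ∈ s) (hb : b ∉ s) :
    ∃ x ∈ s, ∃ y ∉ s, r x y := by
  induction h with
  | refl => exact absurd ha hb
  | @tail c d _ hcd ih =>
    by_cases hc : c ∈ s
    · exact ⟨c, hc, d, hb, hcd⟩
    · exact ih hc

namespace List

variable {α : Type*}

lemma exists_max_length (P : List α → Prop) (B : ℕ) (hB : ∀ l, P l → l.length ≤ B)
    (h : ∃ l, P l) : ∃ l, P l ∧ ∀ l', P l' → l'.length ≤ l.length := by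
  classical
  obtain ⟨l₀, h₀⟩ := h
  obtain ⟨l, hl, hlen⟩ := Nat.findGreatest_spec (P := fun k => ∃ l, P l ∧ l.length = k)
    (hB l₀ h₀) ⟨l₀, h₀, rfl⟩
  exact ⟨l, hl, fun l' hl' => hlen ▸ Nat.le_findGreatest (hB l' hl') ⟨l', hl', rfl⟩⟩

variable [Fintype α] {l : List α} {p : α → Prop} [DecidablePred p]

lemma Nodup.countP_le_card_filter (h : l.Nodup) : l.countP (p ·) ≤ #{a | p a} := by
  classical
  rw [countP_eq_length_filter, ← toFinset_card_of_nodup (h.filter _)]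
  exact card_le_card fun a => by simp

lemma exists_notMem_of_countP_lt (h : l.countP (p ·) < #{a | p a}) : ∃ a, p a ∧ a ∉ l := by
  classical
  by_contra! H
  refine h.not_ge ?_
  calc #{a | p a} ≤ (l.filter (p ·)).toFinset.card := card_le_card fun a ha => by simp_all
    _ ≤ l.countP (p ·) := countP_eq_length_filter .. ▸ toFinset_card_le _

end List

section Walks

variable {E V : Type*} (src tgt : E → V)

def IsWalk : V → V → List E → Prop
  | u, v, [] => u = v
  | u, v, e :: l => src e = u ∧ IsWalk (tgt e) v l

variable {src tgt} {u v w : V} {l l₁ l₂ : List E}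

@[simp] lemma isWalk_nil : IsWalk src tgt u v [] ↔ u = v := Iff.rfl

@[simp] lemma isWalk_cons {e : E} :
    IsWalk src tgt u v (e :: l) ↔ src e = u ∧ IsWalk src tgt (tgt e) v l := Iff.rfl

lemma isWalk_append :
    IsWalk src tgt u w (l₁ ++ l₂) ↔ ∃ v, IsWalk src tgt u v l₁ ∧ IsWalk src tgt v w l₂ := by
  induction l₁ generalizing u with
  | nil => simp
  | cons e l ih => simp [ih, and_assoc]

lemma isWalk_concat {e : E} :
    IsWalk src tgt u v (l ++ [e]) ↔ IsWalk src tgt u (src e) l ∧ tgt e = v := by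
  simp [isWalk_append]

lemma IsWalk.rotate (h : IsWalk src tgt v v l) (k : ℕ) :
    ∃ x, IsWalk src tgt x x (l.rotate k) := by
  rw [← l.take_append_drop (k % l.length), isWalk_append] at h
  obtain ⟨x, h₁, h₂⟩ := h
  exact ⟨x, List.rotate_eq_drop_append_take_mod ▸ isWalk_append.2 ⟨v, h₂, h₁⟩⟩

lemma IsWalk.tgt_getElem_zero (h : IsWalk src tgt v v l) (hl : 0 < l.length) :
    tgt l[0] = src (l[1 % l.length]'(Nat.mod_lt _ hl)) := by
  match l, h with
  | [e], h => simp_all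
  | e :: f :: l, h => simp_all

lemma IsWalk.tgt_getElem_mod (h : IsWalk src tgt v v l) (hl : 0 < l.length) (i : ℕ) :
    tgt (l[i % l.length]'(Nat.mod_lt _ hl)) = src (l[(i + 1) % l.length]'(Nat.mod_lt _ hl)) := by
  obtain ⟨x, hx⟩ := h.rotate i
  have := hx.tgt_getElem_zero (by simpa using hl)
  simpa [Nat.add_comm 1, Nat.add_mod_mod] using this

lemma IsWalk.countP_add [DecidableEq V] (h : IsWalk src tgt u w l) (x : V) :
    l.countP (src · = x) + (if w = x then 1 else 0) =
      l.countP (tgt · = x) + (if u = x then 1 else 0) := by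
  induction l generalizing u with
  | nil => simp_all
  | cons e l ih =>
    obtain ⟨rfl, h⟩ := h
    have := ih h
    simp only [List.countP_cons, decide_eq_true_eq]
    split_ifs at * <;> omega

variable [Fintype E] [DecidableEq V]

lemma IsWalk.exists_closed_trail_cons (hl : IsWalk src tgt v v l) (hnd : l.Nodup) {f : E}
    (hf : f ∉ l) (hbal : ∀ x, #{e | src e = x} = #{e | tgt e = x}) :
    ∃ m, IsWalk src tgt (src f) (src f) (f :: m) ∧ (l ++ f :: m).Nodup := by
  obtain ⟨m, ⟨x, hm, hnd'⟩, hmax⟩ := List.exists_max_length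
    (fun m => ∃ x, IsWalk src tgt (src f) x (f :: m) ∧ (l ++ f :: m).Nodup) (Fintype.card E)
    (fun m ⟨_, _, h⟩ => by have := h.length_le_card; simp at this; omega)
    ⟨[], tgt f, by simp, by simpa using hnd.concat hf⟩
  by_cases hx : x = src f
  · exact ⟨m, hx ▸ hm, hnd'⟩
  -- `l ++ f :: m` enters `x` once more than it leaves it, so by balance some edge out of `x` is
  -- still unused, contradicting maximality.
  have hcount : (l ++ f :: m).countP (src · = x) < #{e | src e = x} := by
    have h₁ := hl.countP_add x
    have h₂ := hm.countP_add x
    have h₃ : (l ++ f :: m).countP (tgt · = x) ≤ #{e | tgt e = x} :=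
      hnd'.countP_le_card_filter
    simp only [↓reduceIte, if_neg (Ne.symm hx)] at h₁ h₂
    rw [List.countP_append, hbal]
    rw [List.countP_append] at h₃
    omega
  obtain ⟨e, rfl, he⟩ := List.exists_notMem_of_countP_lt hcount
  have := hmax (m ++ [e]) ⟨tgt e, by simpa [isWalk_concat] using hm, by simpa using hnd'.concat he⟩
  simp at this

theorem exists_eulerian_circuit [Nonempty E] (hbal : ∀ x, #{e | src e = x} = #{e | tgt e = x})
    (hconn : ∀ a b : E, Relation.ReflTransGen (fun a b => tgt a = src b) a b) :
    ∃ v l, IsWalk src tgt v v l ∧ l.Nodup ∧ ∀ e, e ∈ l := by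
  obtain ⟨e₀⟩ := ‹Nonempty E›
  obtain ⟨l, ⟨v, hl, hnd⟩, hmax⟩ := List.exists_max_length
    (fun l => ∃ v, IsWalk src tgt v v l ∧ l.Nodup) (Fintype.card E)
    (fun l ⟨_, _, h⟩ => h.length_le_card) ⟨[], src e₀, rfl, List.nodup_nil⟩
  refine ⟨v, l, hl, hnd, fun e => by_contra fun he => ?_⟩
  suffices ∃ l', (∃ v', IsWalk src tgt v' v' l' ∧ l'.Nodup) ∧ l.length < l'.length by
    obtain ⟨l', hl', hlt⟩ := this
    exact (hmax l' hl').not_gt hlt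
  by_cases hl₀ : l = []
  · subst hl₀
    obtain ⟨m, hm, hnd'⟩ := hl.exists_closed_trail_cons hnd he hbal
    exact ⟨e :: m, ⟨_, hm, hnd'⟩, by simp⟩
  obtain ⟨a, ha⟩ := List.exists_mem_of_ne_nil l hl₀
  obtain ⟨b, hb, c, hc, hbc⟩ := (hconn a e).exists_mem_notMem_rel (s := {x | x ∈ l}) ha he
  obtain ⟨m, hm, hnd'⟩ := hl.exists_closed_trail_cons hnd hc hbal
  obtain ⟨l₁, l₂, rfl⟩ := List.append_of_mem hb
  obtain ⟨x, h₁, h₂⟩ := isWalk_append.1 (List.append_cons l₁ b l₂ ▸ hl)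
  obtain rfl : tgt b = x := (isWalk_concat.1 h₁).2
  refine ⟨l₁ ++ [b] ++ (c :: m ++ l₂),
    ⟨v, isWalk_append.2 ⟨_, h₁, isWalk_append.2 ⟨_, hbc ▸ hm, h₂⟩⟩, ?_⟩, by simp⟩
  have hperm : (l₁ ++ b :: l₂ ++ c :: m).Perm (l₁ ++ [b] ++ (c :: m ++ l₂)) := by
    simpa using (List.perm_append_comm (l₁ := l₂) (l₂ := c :: m)).cons b |>.append_left l₁
  exact hperm.nodup_iff.1 hnd'

theorem exists_eulerian_sequence [Nonempty E] (hbal : ∀ x, #{e | src e = x} = #{e | tgt e = x})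
    (hconn : ∀ a b : E, Relation.ReflTransGen (fun a b => tgt a = src b) a b) :
    ∃ c : ℕ → E, (∀ i, c (i + Fintype.card E) = c i) ∧ (∀ i, tgt (c i) = src (c (i + 1))) ∧
      ∀ e, ∃! i, i < Fintype.card E ∧ c i = e := by
  classical
  obtain ⟨v, l, hl, hnd, hall⟩ := exists_eulerian_circuit hbal hconn
  have hlen : l.length = Fintype.card E := le_antisymm hnd.length_le_card <|
    calc Fintype.card E ≤ l.toFinset.card := card_le_card fun e _ => List.mem_toFinset.2 (hall e)
      _ ≤ l.length := List.toFinset_card_le l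
  have hpos : 0 < l.length := hlen ▸ Fintype.card_pos
  refine ⟨fun i => l[i % l.length]'(Nat.mod_lt _ hpos), fun i => ?_, hl.tgt_getElem_mod hpos,
    fun e => ?_⟩
  · simp [← hlen]
  obtain ⟨i, hi, rfl⟩ := List.getElem_of_mem (hall e)
  refine ⟨i, ⟨hlen ▸ hi, by simp [Nat.mod_eq_of_lt hi]⟩, fun j ⟨hj, hje⟩ => ?_⟩
  rw [← hlen] at hj
  simpa [Nat.mod_eq_of_lt hj, hnd.getElem_inj_iff] using hje

end Walks

section DeBruijn

variable {σ : Type*} {m : ℕ}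

def window (w : ℕ → σ) (k i : ℕ) : Fin k → σ := fun t => w (i + t)

lemma window_eq_iff {w : ℕ → σ} {k i : ℕ} {g : Fin k → σ} :
    window w k i = g ↔ ∀ t : Fin k, w (i + t) = g t :=
  funext_iff

lemma tail_window (w : ℕ → σ) (i : ℕ) :
    Fin.tail (window w (m + 1) i) = Fin.init (window w (m + 1) (i + 1)) := by
  funext t
  simp [window, Fin.tail, Fin.init, Nat.add_assoc, Nat.add_comm 1]

lemma reflTransGen_window (w : ℕ → σ) {i j : ℕ} (hij : i ≤ j) :
    Relation.ReflTransGen (fun a b : Fin (m + 1) → σ => Fin.tail a = Fin.init b)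
      (window w (m + 1) i) (window w (m + 1) j) := by
  induction hij with
  | refl => rfl
  | step _ ih => exact ih.tail (tail_window w _)

lemma reflTransGen_tail_eq_init (a b : Fin (m + 1) → σ) :
    Relation.ReflTransGen (fun a b : Fin (m + 1) → σ => Fin.tail a = Fin.init b) a b := by
  let w : ℕ → σ := fun i =>
    if h : i < m + 1 then a ⟨i, h⟩ else b (Fin.ofNat (m + 1) (i - (m + 1)))
  have ha : window w (m + 1) 0 = a := by
    funext t
    simp [w, window, show ¬m < (t : ℕ) by omega]
  have hb : window w (m + 1) (m + 1) = b := by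
    funext t
    simp [w, window, show ¬m + 1 + (t : ℕ) ≤ m by omega]
  exact ha ▸ hb ▸ reflTransGen_window w (Nat.zero_le _)

lemma window_eq_of_tail_eq_init {c : ℕ → Fin (m + 1) → σ}
    (hc : ∀ i, Fin.tail (c i) = Fin.init (c (i + 1))) (i : ℕ) :
    window (fun j => c j 0) (m + 1) i = c i := by
  funext t
  induction t using Fin.induction generalizing i with
  | zero => simp [window]
  | succ t ih =>
    have := congrFun (hc i) t
    simp only [Fin.tail, Fin.init] at this
    rw [this, ← ih (i + 1)]
    simp [window, Nat.add_assoc, Nat.add_comm 1]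

lemma le_period_of_existsUnique_window {w : ℕ → σ} {k N d : ℕ}
    (hw : ∀ g : Fin k → σ, ∃! i, i < N ∧ window w k i = g) (hd : 0 < d)
    (hper : ∀ i, w (i + d) = w i) : N ≤ d := by
  by_contra! hdN
  obtain ⟨i, -, huniq⟩ := hw (window w k 0)
  have h₀ := huniq 0 ⟨hd.trans hdN, rfl⟩
  have h₁ := huniq d ⟨hdN, by funext t; simp [window, Nat.add_comm d, hper]⟩
  omega

variable [Fintype σ] [DecidableEq σ]

lemma card_filter_init_eq (v : Fin m → σ) :
    #{e : Fin (m + 1) → σ | Fin.init e = v} = Fintype.card σ := by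
  calc #{e : Fin (m + 1) → σ | Fin.init e = v}
        = #(univ.image fun c : σ => (Fin.snoc v c : Fin (m + 1) → σ)) := by
        congr 1
        ext e
        simp only [mem_filter, mem_univ, true_and, mem_image]
        exact ⟨fun h => ⟨e (Fin.last m), h ▸ Fin.snoc_init_self e⟩, fun ⟨c, h⟩ => by simp [← h]⟩
    _ = Fintype.card σ := card_image_of_injective _ (Fin.snoc_right_injective (α := fun _ => σ) v)

lemma card_filter_tail_eq (v : Fin m → σ) :
    #{e : Fin (m + 1) → σ | Fin.tail e = v} = Fintype.card σ := by
  calc #{e : Fin (m + 1) → σ | Fin.tail e = v}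
        = #(univ.image fun c : σ => (Fin.cons c v : Fin (m + 1) → σ)) := by
        congr 1
        ext e
        simp only [mem_filter, mem_univ, true_and, mem_image]
        exact ⟨fun h => ⟨e 0, h ▸ Fin.cons_self_tail e⟩, fun ⟨c, h⟩ => by simp [← h]⟩
    _ = Fintype.card σ := card_image_of_injective _ (Fin.cons_left_injective (α := fun _ => σ) v)

end DeBruijn

/-- For every alphabet of size `s ≥ 2` and every `n ≥ 1` there exists
a cyclic word `w` of length `s^n` whose `s^n` cyclic length-`n` windows are exactly the
`s^n` distinct `n`-grams, each appearing exactly once (a cyclic de Bruijn word of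
order `n`).  Moreover, any such cyclic word has primitive period exactly `s^n`:
`s^n` is a period, and every period `d ≥ 1` satisfies `s^n ≤ d`. -/
theorem deBruijn_word_exists_and_primitive_period
    (σ : Type*) [Fintype σ] [DecidableEq σ] (n : ℕ) (hn : 1 ≤ n)
    (hs : 2 ≤ Fintype.card σ) :
    (∃ w : ℕ → σ,
      (∀ i, w (i + Fintype.card σ ^ n) = w i) ∧
      (∀ g : Fin n → σ, ∃! i, i < Fintype.card σ ^ n ∧
        ∀ t : Fin n, w (i + (t : ℕ)) = g t)) ∧
    (∀ w : ℕ → σ,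
      (∀ i, w (i + Fintype.card σ ^ n) = w i) →
      (∀ g : Fin n → σ, ∃! i, i < Fintype.card σ ^ n ∧
        ∀ t : Fin n, w (i + (t : ℕ)) = g t) →
      ∀ d : ℕ, 0 < d → (∀ i, w (i + d) = w i) → Fintype.card σ ^ n ≤ d) := by
  refine ⟨?_, fun w _ hw d hd hper =>
    le_period_of_existsUnique_window (fun g => by simpa only [window_eq_iff] using hw g) hd hper⟩
  obtain ⟨m, rfl⟩ : ∃ m, n = m + 1 := ⟨n - 1, by omega⟩
  have : Nonempty σ := Fintype.card_pos_iff.1 (by omega)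
  obtain ⟨c, hper, hlink, huniq⟩ := exists_eulerian_sequence
    (src := (Fin.init : (Fin (m + 1) → σ) → Fin m → σ)) (tgt := Fin.tail)
    (fun v => by rw [card_filter_init_eq, card_filter_tail_eq]) reflTransGen_tail_eq_init
  rw [Fintype.card_fun, Fintype.card_fin] at hper huniq
  refine ⟨fun i => c i 0, fun i => congrFun (hper i) 0, fun g => ?_⟩
  refine (existsUnique_congr fun i => and_congr_right' ?_).1 (huniq g)
  rw [← window_eq_of_tail_eq_init hlink i]
  exact window_eq_iff
end

section
/- Let ω be a cyclic de Bruijn word of order n over Σ and let r ≥ n. Then: (i) the s^n cyclic length-r windows of ω are pairwise distinct, so the cyclic window distribution ρ_ω^{(r)} assigns mass s^{−n} to each of them; (ii) every contiguous length-n marginal of ρ_ω^{(r)} is the uniform distribution on Σ^n, so ρ_ω^{(r)} is shift-stationary at order ≤ n and its induced order-n continuation law is p(a | c) = 1/s for every context c ∈ Σ^{n−1} and token a ∈ Σ; (iii) the project–lift rollout of ρ_ω^{(r)} is the uniform distribution on Σ^r. -/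
/-!
Project–lift diagnostics.

Fix a finite alphabet `σ` with `s = |σ| ≥ 2` and integers `r > n ≥ 1`; we write
`n = m + 1` (contexts have length `m = n − 1`) and `r = m + 1 + L` (`L = r − n` is the
hidden extra depth; for `r = n` take `L = 0`).  A distribution `ρ` on `Σ^r` is
shift-stationary at order `≤ n` if all its contiguous length-`n` marginals coincide.
`ngramMarg ρ` is its length-`n` marginal (at offset `0`), `ctxMarg ρ` the induced
length-`(n−1)` marginal, `plContLaw ρ a c = ρ_n(c·a)/ρ_{n−1}(c)` the induced order-`n`
continuation law, and `rollout ρ` the project–lift rollout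
`ρ̃(x_1⋯x_r) = ρ_n(x_1⋯x_n) · ∏_{t=n+1}^r p(x_t | x_{t−n+1}⋯x_{t−1})`.
KL divergences are in bits.
-/

open Finset

variable {σ : Type*}

/-- The length-`len` window at offset `t` of a string of length `r = m + 1 + L`. -/
def win (m L len t : ℕ) (h : t + len ≤ m + 1 + L)
    (x : Fin (m + 1 + L) → σ) : Fin len → σ :=
  fun i => x ⟨t + i.val, by have := i.isLt; omega⟩

/-- The contiguous length-`len` marginal at offset `t` of a distribution on `Σ^r`. -/
noncomputable def marg [Fintype σ] [DecidableEq σ] (m L len t : ℕ)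
    (h : t + len ≤ m + 1 + L) (ρ : (Fin (m + 1 + L) → σ) → ℝ)
    (u : Fin len → σ) : ℝ :=
  ∑ x : Fin (m + 1 + L) → σ, if win m L len t h x = u then ρ x else 0

/-- A distribution on sequences: nonnegative and summing to `1`. -/
def IsDistOn [Fintype σ] [DecidableEq σ] {ι : Type*} [Fintype ι] [DecidableEq ι]
    (ρ : (ι → σ) → ℝ) : Prop :=
  (∀ x, 0 ≤ ρ x) ∧ ∑ x, ρ x = 1

/-- Shift-stationarity at order `≤ n` (`n = m+1`): all contiguous length-`n`
marginals coincide. -/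
def ShiftStationary [Fintype σ] [DecidableEq σ] (m L : ℕ)
    (ρ : (Fin (m + 1 + L) → σ) → ℝ) : Prop :=
  ∀ (t₁ t₂ : ℕ) (h₁ : t₁ + (m + 1) ≤ m + 1 + L) (h₂ : t₂ + (m + 1) ≤ m + 1 + L),
    marg m L (m + 1) t₁ h₁ ρ = marg m L (m + 1) t₂ h₂ ρ

/-- The common length-`n` marginal `ρ_n` (computed at offset `0`). -/
noncomputable def ngramMarg [Fintype σ] [DecidableEq σ] (m L : ℕ)
    (ρ : (Fin (m + 1 + L) → σ) → ℝ) : (Fin (m + 1) → σ) → ℝ :=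
  marg m L (m + 1) 0 (by omega) ρ

/-- The induced length-`(n−1)` (context) marginal `ρ_{n−1}`. -/
noncomputable def ctxMarg [Fintype σ] [DecidableEq σ] (m L : ℕ)
    (ρ : (Fin (m + 1 + L) → σ) → ℝ) (c : Fin m → σ) : ℝ :=
  ∑ a, ngramMarg m L ρ (Fin.snoc c a)

/-- The induced order-`n` continuation law `p(a | c) = ρ_n(c·a)/ρ_{n−1}(c)`. -/
noncomputable def plContLaw [Fintype σ] [DecidableEq σ] (m L : ℕ)
    (ρ : (Fin (m + 1 + L) → σ) → ℝ) (a : σ) (c : Fin m → σ) : ℝ :=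
  ngramMarg m L ρ (Fin.snoc c a) / ctxMarg m L ρ c

/-- The project–lift rollout
`ρ̃(x_1⋯x_r) = ρ_n(x_1⋯x_n) · ∏_{t=n+1}^r p(x_t | x_{t−n+1}⋯x_{t−1})`. -/
noncomputable def rollout [Fintype σ] [DecidableEq σ] (m L : ℕ)
    (ρ : (Fin (m + 1 + L) → σ) → ℝ) : (Fin (m + 1 + L) → σ) → ℝ :=
  fun x =>
    ngramMarg m L ρ (win m L (m + 1) 0 (by omega) x) *
      ∏ t : Fin L,
        plContLaw m L ρ (x ⟨m + 1 + t.val, by have := t.isLt; omega⟩)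
          (win m L m (t.val + 1) (by have := t.isLt; omega) x)

/-- Kullback–Leibler divergence in bits (with the convention `0·log 0 = 0`). -/
noncomputable def klBits {X : Type*} [Fintype X] (μ ν : X → ℝ) : ℝ :=
  ∑ x, μ x * Real.logb 2 (μ x / ν x)

/-- The distribution `ρ_ω^{(r)}` on `Σ^r` (`r = m+1+L`): uniform on the `s^n` cyclic
length-`r` windows of the cyclic word `ω` of length `s^n` (`n = m+1`), one window
starting at each position `i < s^n`. -/
noncomputable def cyclicWindowDist [Fintype σ] [DecidableEq σ] (m L : ℕ)
    (ω : ℕ → σ) : (Fin (m + 1 + L) → σ) → ℝ :=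
  fun g =>
    (∑ i ∈ Finset.range (Fintype.card σ ^ (m + 1)),
      if ∀ t : Fin (m + 1 + L), ω (i + (t : ℕ)) = g t then (1 : ℝ) else 0) /
      (Fintype.card σ ^ (m + 1) : ℝ)

/-- `ω` is a cyclic de Bruijn word of order `n = m+1`: it has period `s^n` and every
`n`-gram appears exactly once among its `s^n` cyclic length-`n` windows. -/
def IsDeBruijnWord [Fintype σ] [DecidableEq σ] (m : ℕ) (ω : ℕ → σ) : Prop :=
  (∀ i, ω (i + Fintype.card σ ^ (m + 1)) = ω i) ∧
  (∀ g : Fin (m + 1) → σ, ∃! i, i < Fintype.card σ ^ (m + 1) ∧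
    ∀ t : Fin (m + 1), ω (i + (t : ℕ)) = g t)

/-!
The de Bruijn word `ω` has period `N = s^n`, so for a fixed `n`-gram `u` and offset `t` the
indicator of "the `n`-window of `ω` at `i + t` is `u`" is `N`-periodic in `i`; its sum over a
full period `i < N` therefore counts the occurrences of `u` among the `N` cyclic windows, which is
exactly one. Hence every contiguous length-`n` marginal of `ρ_ω^{(r)}` is uniform, and a uniform
`n`-gram marginal makes every continuation probability `1/s` and the rollout `s^{-n} s^{-(r-n)}`.
Windows of length `r ≥ n` at distinct positions `i < N` already differ in their first `n` letters.
-/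

open Function

theorem Function.Periodic.sum_range_comp_add {M : Type*} [AddCommMonoid M] {F : ℕ → M} {N : ℕ}
    (hF : Periodic F N) (t : ℕ) : ∑ i ∈ range N, F (i + t) = ∑ i ∈ range N, F i := by
  induction t with
  | zero => rfl
  | succ t ih =>
    rcases N with _ | M
    · simp
    · rw [← ih, sum_range_succ, sum_range_succ' fun i => F (i + t)]
      congr 1
      · exact sum_congr rfl fun i _ => by rw [add_right_comm, add_assoc]
      · rw [zero_add, ← hF t]
        exact congrArg F (by omega)

theorem Finset.sum_boole_eq_one_of_existsUnique {ι R : Type*} [AddCommMonoidWithOne R]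
    {s : Finset ι} {p : ι → Prop} [DecidablePred p] (h : ∃! i, i ∈ s ∧ p i) :
    ∑ i ∈ s, (if p i then (1 : R) else 0) = 1 := by
  rw [sum_boole, card_eq_one_iff_existsUnique.2 (by simpa only [mem_filter] using h), Nat.cast_one]

section ProjectLift

variable [Fintype σ] [DecidableEq σ] {m L : ℕ} {ρ : (Fin (m + 1 + L) → σ) → ℝ}

theorem plContLaw_of_uniform_ngramMarg
    (hρ : ∀ u, ngramMarg m L ρ u = 1 / (Fintype.card σ ^ (m + 1) : ℝ)) (a : σ) (c : Fin m → σ) :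
    plContLaw m L ρ a c = 1 / (Fintype.card σ : ℝ) := by
  have hs : (Fintype.card σ : ℝ) ≠ 0 := Nat.cast_ne_zero.2 (Fintype.card_pos_iff.2 ⟨a⟩).ne'
  simp only [plContLaw, ctxMarg, hρ, sum_const, card_univ, nsmul_eq_mul]
  field_simp

theorem rollout_of_uniform_ngramMarg
    (hρ : ∀ u, ngramMarg m L ρ u = 1 / (Fintype.card σ ^ (m + 1) : ℝ)) (x : Fin (m + 1 + L) → σ) :
    rollout m L ρ x = 1 / (Fintype.card σ ^ (m + 1 + L) : ℝ) := by
  simp only [rollout, hρ, plContLaw_of_uniform_ngramMarg hρ, prod_const, card_univ,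
    Fintype.card_fin, div_pow, one_pow, one_div_mul_one_div, pow_add]

end ProjectLift

theorem marg_cyclicWindowDist_eq [Fintype σ] [DecidableEq σ] (m L : ℕ) (ω : ℕ → σ) {len t : ℕ}
    (h : t + len ≤ m + 1 + L) (u : Fin len → σ) :
    marg m L len t h (cyclicWindowDist m L ω) u =
      (∑ i ∈ range (Fintype.card σ ^ (m + 1)),
        if ∀ k : Fin len, ω (i + t + k) = u k then (1 : ℝ) else 0) /
        (Fintype.card σ ^ (m + 1) : ℝ) := by
  simp only [marg, cyclicWindowDist, ← funext_iff, ← sum_filter, sum_div]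
  rw [sum_fiberwise_eq_sum_filter]
  simp only [mem_filter, mem_univ, true_and, add_assoc]
  rfl

namespace IsDeBruijnWord

variable [Fintype σ] [DecidableEq σ] {m : ℕ} {ω : ℕ → σ}

theorem eq_of_window_eq (hω : IsDeBruijnWord m ω) {len : ℕ} (hlen : m + 1 ≤ len) {i j : ℕ}
    (hi : i < Fintype.card σ ^ (m + 1)) (hj : j < Fintype.card σ ^ (m + 1))
    (h : ∀ k : Fin len, ω (i + k) = ω (j + k)) : i = j :=
  (hω.2 fun k => ω (j + k)).unique ⟨hi, fun k => h (Fin.castLE hlen k)⟩ ⟨hj, fun _ => rfl⟩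

theorem sum_window_indicator_eq_one (hω : IsDeBruijnWord m ω) (t : ℕ) (u : Fin (m + 1) → σ) :
    ∑ i ∈ range (Fintype.card σ ^ (m + 1)),
      (if ∀ k : Fin (m + 1), ω (i + t + k) = u k then (1 : ℝ) else 0) = 1 := by
  have hper : Periodic (fun i => if ∀ k : Fin (m + 1), ω (i + k) = u k then (1 : ℝ) else 0)
      (Fintype.card σ ^ (m + 1)) := fun i => by simp only [add_right_comm i, hω.1]
  rw [hper.sum_range_comp_add t]
  exact sum_boole_eq_one_of_existsUnique (by simpa only [mem_range] using hω.2 u)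

theorem marg_cyclicWindowDist (hω : IsDeBruijnWord m ω) (L t : ℕ)
    (h : t + (m + 1) ≤ m + 1 + L) (u : Fin (m + 1) → σ) :
    marg m L (m + 1) t h (cyclicWindowDist m L ω) u = 1 / (Fintype.card σ ^ (m + 1) : ℝ) := by
  rw [marg_cyclicWindowDist_eq, hω.sum_window_indicator_eq_one]

theorem cyclicWindowDist_window (hω : IsDeBruijnWord m ω) (L : ℕ) {i : ℕ}
    (hi : i < Fintype.card σ ^ (m + 1)) :
    cyclicWindowDist m L ω (fun t => ω (i + t)) = 1 / (Fintype.card σ ^ (m + 1) : ℝ) := by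
  rw [cyclicWindowDist, sum_boole_eq_one_of_existsUnique]
  exact ⟨i, ⟨mem_range.2 hi, fun _ => rfl⟩,
    fun j ⟨hj, hji⟩ => hω.eq_of_window_eq (Nat.le_add_right _ _) (mem_range.1 hj) hi hji⟩

end IsDeBruijnWord

theorem deBruijn_cyclicWindowDist_properties_general [Fintype σ] [DecidableEq σ]
    (m L : ℕ) (ω : ℕ → σ) (hω : IsDeBruijnWord m ω) :
    ((∀ i j, i < Fintype.card σ ^ (m + 1) → j < Fintype.card σ ^ (m + 1) →
        (∀ t : Fin (m + 1 + L), ω (i + (t : ℕ)) = ω (j + (t : ℕ))) → i = j) ∧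
      (∀ i, i < Fintype.card σ ^ (m + 1) →
        cyclicWindowDist m L ω (fun t : Fin (m + 1 + L) => ω (i + (t : ℕ))) =
          1 / (Fintype.card σ ^ (m + 1) : ℝ))) ∧
    ((∀ (t : ℕ) (h : t + (m + 1) ≤ m + 1 + L) (u : Fin (m + 1) → σ),
        marg m L (m + 1) t h (cyclicWindowDist m L ω) u =
          1 / (Fintype.card σ ^ (m + 1) : ℝ)) ∧
      ShiftStationary m L (cyclicWindowDist m L ω) ∧
      (∀ (c : Fin m → σ) (a : σ),
        plContLaw m L (cyclicWindowDist m L ω) a c = 1 / (Fintype.card σ : ℝ))) ∧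
    (∀ x : Fin (m + 1 + L) → σ,
      rollout m L (cyclicWindowDist m L ω) x =
        1 / (Fintype.card σ ^ (m + 1 + L) : ℝ)) := by
  have hmarg := hω.marg_cyclicWindowDist L
  have hngram : ∀ u, ngramMarg m L (cyclicWindowDist m L ω) u =
      1 / (Fintype.card σ ^ (m + 1) : ℝ) := hmarg 0 (by omega)
  refine ⟨⟨fun i j hi hj h => hω.eq_of_window_eq (Nat.le_add_right _ _) hi hj h,
      fun i hi => hω.cyclicWindowDist_window L hi⟩,
    ⟨hmarg, fun t₁ t₂ h₁ h₂ => funext fun u => (hmarg t₁ h₁ u).trans (hmarg t₂ h₂ u).symm,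
      fun c a => plContLaw_of_uniform_ngramMarg hngram a c⟩,
    rollout_of_uniform_ngramMarg hngram⟩

/-- Let `ω` be a cyclic de Bruijn word of order `n = m+1` over `σ`
and let `r = m+1+L ≥ n`.  Then:
(i) the `s^n` cyclic length-`r` windows of `ω` are pairwise distinct, so the cyclic
window distribution `ρ_ω^{(r)}` assigns mass `s^{−n}` to each of them;
(ii) every contiguous length-`n` marginal of `ρ_ω^{(r)}` is uniform on `Σ^n` — in
particular `ρ_ω^{(r)}` is shift-stationary at order `≤ n` — and its induced order-`n`
continuation law is `p(a|c) = 1/s` for every context `c` and token `a`;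
(iii) the project–lift rollout of `ρ_ω^{(r)}` is the uniform distribution on `Σ^r`. -/
theorem deBruijn_cyclicWindowDist_properties [Fintype σ] [DecidableEq σ]
    (m L : ℕ) (hs : 2 ≤ Fintype.card σ) (ω : ℕ → σ) (hω : IsDeBruijnWord m ω) :
    ((∀ i j, i < Fintype.card σ ^ (m + 1) → j < Fintype.card σ ^ (m + 1) →
        (∀ t : Fin (m + 1 + L), ω (i + (t : ℕ)) = ω (j + (t : ℕ))) → i = j) ∧
      (∀ i, i < Fintype.card σ ^ (m + 1) →
        cyclicWindowDist m L ω (fun t : Fin (m + 1 + L) => ω (i + (t : ℕ))) =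
          1 / (Fintype.card σ ^ (m + 1) : ℝ))) ∧
    ((∀ (t : ℕ) (h : t + (m + 1) ≤ m + 1 + L) (u : Fin (m + 1) → σ),
        marg m L (m + 1) t h (cyclicWindowDist m L ω) u =
          1 / (Fintype.card σ ^ (m + 1) : ℝ)) ∧
      ShiftStationary m L (cyclicWindowDist m L ω) ∧
      (∀ (c : Fin m → σ) (a : σ),
        plContLaw m L (cyclicWindowDist m L ω) a c = 1 / (Fintype.card σ : ℝ))) ∧
    (∀ x : Fin (m + 1 + L) → σ,
      rollout m L (cyclicWindowDist m L ω) x =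
        1 / (Fintype.card σ ^ (m + 1 + L) : ℝ)) :=
  deBruijn_cyclicWindowDist_properties_general m L ω hω
end
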